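/- arXiv:1811.06064 — 5 statements merged into one kernel-verified Lean document; each statement's English description precedes it below -/
import Mathlib

section
/- In any snake graph, the set of boundary edges decomposes as the disjoint union of two perfect matchings: the minimal perfect matching P_min and the maximal perfect matching P_max; in particular P_min ∪ P_max is the set of all boundary edges and P_min ∩ P_max = ∅. -/
/-- A position in the integer grid; tiles are unit squares with a given south-west corner. -/
abbrev Pos : Type := ℤ × ℤ

/-- An edge of the grid: a base vertex together with a direction
(`true` = horizontal edge to the east, `false` = vertical edge to the north). -/
abbrev SEdge : Type := Pos × Bool

/-- The two endpoints of an edge. -/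
def edgeVerts (e : SEdge) : Finset Pos :=
  {e.1, if e.2 then (e.1.1 + 1, e.1.2) else (e.1.1, e.1.2 + 1)}

/-- The four edges of the unit-square tile whose south-west corner is `p`:
bottom, left, right and top edges. -/
def tileEdges (p : Pos) : Finset SEdge :=
  {(p, true), (p, false), ((p.1 + 1, p.2), false), ((p.1, p.2 + 1), true)}

/-- The four vertices of the tile with south-west corner `p`. -/
def tileVerts (p : Pos) : Finset Pos := (tileEdges p).biUnion edgeVerts

/-- The list of south-west corners of the tiles of a snake graph built from gluing data `g`
(`true` = the next tile is glued to the right edge, `false` = glued to the top edge),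
starting at position `p`. -/
def tilePosFrom : List Bool → Pos → List Pos
  | [], p => [p]
  | b :: g, p => p :: tilePosFrom g (if b then (p.1 + 1, p.2) else (p.1, p.2 + 1))

/-- The tiles of the snake graph with gluing data `g`; a snake graph with `n + 1` tiles
corresponds to `g` of length `n`. -/
def snakeTiles (g : List Bool) : List Pos := tilePosFrom g (0, 0)

/-- The edge set of the snake graph with gluing data `g`. -/
def snakeEdges (g : List Bool) : Finset SEdge :=
  (snakeTiles g).toFinset.biUnion tileEdges

/-- The vertex set of the snake graph with gluing data `g`. -/
def snakeVerts (g : List Bool) : Finset Pos := (snakeEdges g).biUnion edgeVerts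

/-- `P` is a perfect matching of the graph with edge set `E`: a subset of the edges such
that every vertex is incident to exactly one edge of `P`. -/
def IsPM (E P : Finset SEdge) : Prop :=
  P ⊆ E ∧ ∀ v ∈ E.biUnion edgeVerts, ∃! e, e ∈ P ∧ v ∈ edgeVerts e

/-- The boundary edges of the snake graph: edges lying in exactly one tile. -/
def boundary (g : List Bool) : Finset SEdge :=
  (snakeEdges g).filter
    (fun e => (snakeTiles g).countP (fun p => decide (e ∈ tileEdges p)) = 1)

/-- `P` is the minimal perfect matching of the snake graph with gluing data `g`:
the perfect matching consisting only of boundary edges which contains the bottom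
edge of the first tile. -/
def IsMinPM (g : List Bool) (P : Finset SEdge) : Prop :=
  IsPM (snakeEdges g) P ∧ P ⊆ boundary g ∧ (((0 : ℤ), (0 : ℤ)), true) ∈ P


/-!
Every vertex of a snake graph lies on exactly two boundary edges, so removing a perfect matching
made of boundary edges from the boundary leaves another one. Such a matching exists by induction
on the tiles: take a boundary matching of the snake without its first tile that avoids the glued
edge (passing to the complement if necessary), and add the edge of the first tile opposite the
glued one. Either this matching or its complement contains the bottom edge of the first tile.
-/

open Finset

def nextTile (b : Bool) (p : Pos) : Pos := if b then (p.1 + 1, p.2) else (p.1, p.2 + 1)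

def gluedEdge (b : Bool) (p : Pos) : SEdge :=
  if b then ((p.1 + 1, p.2), false) else ((p.1, p.2 + 1), true)

def oppositeEdge (b : Bool) (p : Pos) : SEdge := if b then (p, false) else (p, true)

lemma tilePosFrom_cons (b : Bool) (g : List Bool) (p : Pos) :
    tilePosFrom (b :: g) p = p :: tilePosFrom g (nextTile b p) := rfl

lemma mem_tileEdges {e : SEdge} {p : Pos} :
    e ∈ tileEdges p ↔
      (e.2 = true ∧ e.1.1 = p.1 ∧ (e.1.2 = p.2 ∨ e.1.2 = p.2 + 1)) ∨
      (e.2 = false ∧ (e.1.1 = p.1 ∨ e.1.1 = p.1 + 1) ∧ e.1.2 = p.2) := by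
  obtain ⟨⟨x, y⟩, t⟩ := e
  cases t <;> simp [tileEdges, Prod.ext_iff] <;> tauto

lemma mem_edgeVerts {v : Pos} {e : SEdge} :
    v ∈ edgeVerts e ↔
      v = e.1 ∨ (e.2 = true ∧ v.1 = e.1.1 + 1 ∧ v.2 = e.1.2) ∨
      (e.2 = false ∧ v.1 = e.1.1 ∧ v.2 = e.1.2 + 1) := by
  obtain ⟨⟨x, y⟩, t⟩ := e
  cases t <;> simp [edgeVerts, Prod.ext_iff]

lemma mem_tileVerts {v p : Pos} :
    v ∈ tileVerts p ↔ (v.1 = p.1 ∨ v.1 = p.1 + 1) ∧ (v.2 = p.2 ∨ v.2 = p.2 + 1) := by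
  obtain ⟨a, b⟩ := v; obtain ⟨x, y⟩ := p
  simp only [tileVerts, tileEdges, edgeVerts, mem_biUnion, mem_insert, mem_singleton]
  constructor
  · rintro ⟨e, he, hv⟩
    rcases he with rfl | rfl | rfl | rfl <;> simp [Prod.ext_iff] at hv <;> omega
  · rintro ⟨h1 | h1, h2 | h2⟩ <;> subst h1 h2 <;> simp

lemma edgeVerts_subset_tileVerts {e : SEdge} {p : Pos} (he : e ∈ tileEdges p) :
    edgeVerts e ⊆ tileVerts p :=
  subset_biUnion_of_mem edgeVerts he

lemma le_of_mem_tilePosFrom : ∀ {g : List Bool} {p q : Pos}, q ∈ tilePosFrom g p → p ≤ q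
  | [], p, q, h => by simp_all [tilePosFrom]
  | b :: g, p, q, h => by
    rw [tilePosFrom_cons, List.mem_cons] at h
    rcases h with rfl | h
    · rfl
    · have := le_of_mem_tilePosFrom h
      cases b <;> simp_all [nextTile, Prod.le_def] <;> omega

lemma nodup_tilePosFrom : ∀ (g : List Bool) (p : Pos), (tilePosFrom g p).Nodup
  | [], p => List.nodup_singleton p
  | b :: g, p => by
    refine List.nodup_cons.mpr ⟨fun hp => ?_, nodup_tilePosFrom g _⟩
    have := le_of_mem_tilePosFrom hp
    cases b <;> simp [Prod.le_def] at this

lemma head_mem_tilePosFrom (g : List Bool) (p : Pos) : p ∈ tilePosFrom g p := by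
  cases g <;> simp [tilePosFrom]

lemma gluedEdge_mem_tileEdges (b : Bool) (p : Pos) : gluedEdge b p ∈ tileEdges p := by
  cases b <;> simp [gluedEdge, tileEdges]

lemma gluedEdge_mem_tileEdges_nextTile (b : Bool) (p : Pos) :
    gluedEdge b p ∈ tileEdges (nextTile b p) := by
  cases b <;> simp [gluedEdge, nextTile, tileEdges]

lemma eq_gluedEdge_of_mem_tileEdges {b : Bool} {g : List Bool} {p q : Pos} {e : SEdge}
    (hq : q ∈ tilePosFrom g (nextTile b p)) (heq : e ∈ tileEdges q) (hep : e ∈ tileEdges p) :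
    e = gluedEdge b p ∧ q = nextTile b p := by
  have hle := le_of_mem_tilePosFrom hq
  obtain ⟨⟨x, y⟩, t⟩ := e
  obtain ⟨a, c⟩ := q
  rw [mem_tileEdges] at heq hep
  cases t <;> cases b <;> simp [gluedEdge, nextTile, Prod.le_def, Prod.ext_iff] at * <;> omega

-- The snake graph with its first tile at `p`, so that induction on `g` can drop that tile.
def snakeEdgesFrom (g : List Bool) (p : Pos) : Finset SEdge :=
  (tilePosFrom g p).toFinset.biUnion tileEdges

def snakeVertsFrom (g : List Bool) (p : Pos) : Finset Pos :=
  (snakeEdgesFrom g p).biUnion edgeVerts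

def boundaryFrom (g : List Bool) (p : Pos) : Finset SEdge :=
  (snakeEdgesFrom g p).filter
    (fun e => (tilePosFrom g p).countP (fun q => decide (e ∈ tileEdges q)) = 1)

lemma snakeEdgesFrom_nil (p : Pos) : snakeEdgesFrom [] p = tileEdges p := by
  simp [snakeEdgesFrom, tilePosFrom]

lemma snakeEdgesFrom_cons (b : Bool) (g : List Bool) (p : Pos) :
    snakeEdgesFrom (b :: g) p = tileEdges p ∪ snakeEdgesFrom g (nextTile b p) := by
  simp [snakeEdgesFrom, tilePosFrom_cons]

lemma snakeVertsFrom_nil (p : Pos) : snakeVertsFrom [] p = tileVerts p := by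
  rw [snakeVertsFrom, snakeEdgesFrom_nil, tileVerts]

lemma snakeVertsFrom_cons (b : Bool) (g : List Bool) (p : Pos) :
    snakeVertsFrom (b :: g) p = tileVerts p ∪ snakeVertsFrom g (nextTile b p) := by
  rw [snakeVertsFrom, snakeEdgesFrom_cons, union_biUnion, tileVerts, snakeVertsFrom]

lemma boundaryFrom_subset_snakeEdgesFrom (g : List Bool) (p : Pos) :
    boundaryFrom g p ⊆ snakeEdgesFrom g p :=
  filter_subset _ _

lemma tileEdges_subset_snakeEdgesFrom (g : List Bool) (p : Pos) :
    tileEdges p ⊆ snakeEdgesFrom g p := by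
  cases g <;> simp [snakeEdgesFrom_nil, snakeEdgesFrom_cons]

lemma le_of_mem_snakeVertsFrom {g : List Bool} {p v : Pos} (hv : v ∈ snakeVertsFrom g p) :
    p ≤ v := by
  obtain ⟨e, he, hve⟩ := mem_biUnion.mp hv
  obtain ⟨q, hq, heq⟩ := mem_biUnion.mp he
  have hpq := le_of_mem_tilePosFrom (List.mem_toFinset.mp hq)
  obtain ⟨⟨x, y⟩, t⟩ := e
  rw [mem_tileEdges] at heq
  rw [mem_edgeVerts] at hve
  rw [Prod.le_def] at hpq ⊢
  cases t <;> simp [Prod.ext_iff] at * <;> omega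

lemma countP_mem_tileEdges_tail (b : Bool) (g : List Bool) {p : Pos} {e : SEdge}
    (hep : e ∈ tileEdges p) :
    (tilePosFrom g (nextTile b p)).countP (fun q => decide (e ∈ tileEdges q)) =
      if e = gluedEdge b p then 1 else 0 := by
  split_ifs with he
  · subst he
    rw [← List.count_eq_one_of_mem (nodup_tilePosFrom g _) (head_mem_tilePosFrom g _),
      List.count_eq_countP]
    refine List.countP_congr fun q hq => ?_
    simp only [decide_eq_true_iff, beq_iff_eq]
    exact ⟨fun h => (eq_gluedEdge_of_mem_tileEdges hq h hep).2,
      fun h => h ▸ gluedEdge_mem_tileEdges_nextTile b p⟩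
  · exact List.countP_eq_zero.mpr fun q hq h =>
      he (eq_gluedEdge_of_mem_tileEdges hq (of_decide_eq_true h) hep).1

lemma boundaryFrom_nil (p : Pos) : boundaryFrom [] p = tileEdges p := by
  simp [boundaryFrom, snakeEdgesFrom_nil, tilePosFrom]

lemma boundaryFrom_cons (b : Bool) (g : List Bool) (p : Pos) :
    boundaryFrom (b :: g) p =
      (tileEdges p).erase (gluedEdge b p) ∪
        (boundaryFrom g (nextTile b p)).erase (gluedEdge b p) := by
  ext e
  by_cases hep : e ∈ tileEdges p
  · have hc := countP_mem_tileEdges_tail b g hep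
    by_cases hsh : e = gluedEdge b p
    · subst hsh
      simp [boundaryFrom, snakeEdgesFrom_cons, tilePosFrom_cons, hc, hep]
    · have hnr : e ∉ snakeEdgesFrom g (nextTile b p) := fun h => by
        obtain ⟨q, hq, heq⟩ := mem_biUnion.mp h
        exact hsh (eq_gluedEdge_of_mem_tileEdges (List.mem_toFinset.mp hq) heq hep).1
      simp [boundaryFrom, snakeEdgesFrom_cons, tilePosFrom_cons, hc, hep, hsh, hnr]
  · have hne : e ≠ gluedEdge b p := fun h => hep (h ▸ gluedEdge_mem_tileEdges b p)
    simp [boundaryFrom, snakeEdgesFrom_cons, tilePosFrom_cons, hep, hne]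

def degreeIn (P : Finset SEdge) (v : Pos) : ℕ := #{e ∈ P | v ∈ edgeVerts e}

lemma isPM_iff {E P : Finset SEdge} :
    IsPM E P ↔ P ⊆ E ∧ ∀ v ∈ E.biUnion edgeVerts, degreeIn P v = 1 := by
  simp only [IsPM, degreeIn, card_eq_one_iff_existsUnique, mem_filter]

lemma degreeIn_union_of_disjoint {P Q : Finset SEdge} (h : Disjoint P Q) (v : Pos) :
    degreeIn (P ∪ Q) v = degreeIn P v + degreeIn Q v := by
  rw [degreeIn, filter_union, card_union_of_disjoint (disjoint_filter_filter h)]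
  rfl

lemma degreeIn_sdiff {P Q : Finset SEdge} (h : Q ⊆ P) (v : Pos) :
    degreeIn (P \ Q) v = degreeIn P v - degreeIn Q v := by
  have : {e ∈ P \ Q | v ∈ edgeVerts e} =
      {e ∈ P | v ∈ edgeVerts e} \ {e ∈ Q | v ∈ edgeVerts e} := by
    ext; simp only [mem_filter, mem_sdiff]; tauto
  rw [degreeIn, this, card_sdiff_of_subset (filter_subset_filter _ h)]
  rfl

lemma degreeIn_erase_of_mem {P : Finset SEdge} {e : SEdge} {v : Pos} (he : e ∈ P)
    (hv : v ∈ edgeVerts e) : degreeIn (P.erase e) v = degreeIn P v - 1 := by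
  rw [degreeIn, filter_erase, card_erase_of_mem (mem_filter.mpr ⟨he, hv⟩)]
  rfl

lemma degreeIn_erase_of_notMem {P : Finset SEdge} {e : SEdge} {v : Pos}
    (hv : v ∉ edgeVerts e) : degreeIn (P.erase e) v = degreeIn P v := by
  rw [degreeIn, filter_erase, erase_eq_of_notMem (by simp [hv])]
  rfl

lemma degreeIn_insert {P : Finset SEdge} {e : SEdge} {v : Pos} (he : e ∉ P) :
    degreeIn (insert e P) v = degreeIn P v + if v ∈ edgeVerts e then 1 else 0 := by
  rw [degreeIn, filter_insert]
  split_ifs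
  · rw [card_insert_of_notMem fun h => he (mem_filter.mp h).1]
    rfl
  · rfl

lemma degreeIn_eq_zero {P : Finset SEdge} {v : Pos} (hv : v ∉ P.biUnion edgeVerts) :
    degreeIn P v = 0 :=
  card_eq_zero.mpr <| filter_eq_empty_iff.mpr fun e he hve => hv (mem_biUnion.mpr ⟨e, he, hve⟩)

lemma degreeIn_tileEdges {p v : Pos} (hv : v ∈ tileVerts p) : degreeIn (tileEdges p) v = 2 := by
  obtain ⟨a, b⟩ := v; obtain ⟨x, y⟩ := p
  rw [mem_tileVerts] at hv
  obtain ⟨h1 | h1, h2 | h2⟩ := hv <;> simp only at h1 h2 <;> subst h1 h2 <;>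
    simp [degreeIn, tileEdges, edgeVerts, filter_insert, filter_singleton]

lemma IsPM.sdiff {E B P : Finset SEdge} (hP : IsPM E P) (hPB : P ⊆ B) (hBE : B ⊆ E)
    (hB : ∀ v ∈ E.biUnion edgeVerts, degreeIn B v = 2) : IsPM E (B \ P) := by
  rw [isPM_iff] at hP ⊢
  refine ⟨sdiff_subset.trans hBE, fun v hv => ?_⟩
  rw [degreeIn_sdiff hPB, hB v hv, hP.2 v hv]

lemma gluedEdge_mem_boundaryFrom (b : Bool) (g : List Bool) (p : Pos) :
    gluedEdge b p ∈ boundaryFrom g (nextTile b p) := by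
  refine mem_filter.mpr
    ⟨tileEdges_subset_snakeEdgesFrom g _ (gluedEdge_mem_tileEdges_nextTile b p), ?_⟩
  rw [countP_mem_tileEdges_tail b g (gluedEdge_mem_tileEdges b p), if_pos rfl]

lemma edgeVerts_gluedEdge_subset (b : Bool) (g : List Bool) (p : Pos) :
    edgeVerts (gluedEdge b p) ⊆ snakeVertsFrom g (nextTile b p) :=
  subset_biUnion_of_mem edgeVerts
    (tileEdges_subset_snakeEdgesFrom g _ (gluedEdge_mem_tileEdges_nextTile b p))

lemma mem_edgeVerts_gluedEdge {b : Bool} {g : List Bool} {p v : Pos} (hvp : v ∈ tileVerts p)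
    (hvq : v ∈ snakeVertsFrom g (nextTile b p)) : v ∈ edgeVerts (gluedEdge b p) := by
  have hle := le_of_mem_snakeVertsFrom hvq
  rw [mem_tileVerts] at hvp
  rw [mem_edgeVerts]
  obtain ⟨a, c⟩ := v; obtain ⟨x, y⟩ := p
  cases b <;> simp [nextTile, gluedEdge, Prod.le_def, Prod.ext_iff] at * <;> omega

lemma degreeIn_boundaryFrom : ∀ (g : List Bool) (p : Pos), ∀ v ∈ snakeVertsFrom g p,
    degreeIn (boundaryFrom g p) v = 2
  | [], p, v, hv => by
    rw [snakeVertsFrom_nil] at hv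
    rw [boundaryFrom_nil, degreeIn_tileEdges hv]
  | b :: g, p, v, hv => by
    set q := nextTile b p
    set s := gluedEdge b p
    have hdisj : Disjoint ((tileEdges p).erase s) ((boundaryFrom g q).erase s) := by
      refine disjoint_left.mpr fun e he₁ he₂ => ?_
      obtain ⟨hes, hep⟩ := mem_erase.mp he₁
      obtain ⟨r, hr, her⟩ :=
        mem_biUnion.mp (boundaryFrom_subset_snakeEdgesFrom g q (mem_erase.mp he₂).2)
      exact hes (eq_gluedEdge_of_mem_tileEdges (List.mem_toFinset.mp hr) her hep).1
    rw [boundaryFrom_cons, degreeIn_union_of_disjoint hdisj]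
    by_cases hvs : v ∈ edgeVerts s
    · rw [degreeIn_erase_of_mem (gluedEdge_mem_tileEdges b p) hvs,
        degreeIn_erase_of_mem (gluedEdge_mem_boundaryFrom b g p) hvs,
        degreeIn_tileEdges (edgeVerts_subset_tileVerts (gluedEdge_mem_tileEdges b p) hvs),
        degreeIn_boundaryFrom g q v (edgeVerts_gluedEdge_subset b g p hvs)]
    rw [degreeIn_erase_of_notMem hvs, degreeIn_erase_of_notMem hvs]
    by_cases hvq : v ∈ snakeVertsFrom g q
    · have hvp : v ∉ tileVerts p := fun h => hvs (mem_edgeVerts_gluedEdge h hvq)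
      rw [degreeIn_eq_zero hvp, degreeIn_boundaryFrom g q v hvq]
    · have hvp : v ∈ tileVerts p := by
        rw [snakeVertsFrom_cons] at hv
        exact (mem_union.mp hv).resolve_right hvq
      have hvB : v ∉ (boundaryFrom g q).biUnion edgeVerts := fun h =>
        hvq (biUnion_subset_biUnion_of_subset_left _ (boundaryFrom_subset_snakeEdgesFrom g q) h)
      rw [degreeIn_tileEdges hvp, degreeIn_eq_zero hvB]

lemma oppositeEdge_mem_erase_gluedEdge (b : Bool) (p : Pos) :
    oppositeEdge b p ∈ (tileEdges p).erase (gluedEdge b p) := by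
  cases b <;> simp [oppositeEdge, gluedEdge, tileEdges, Prod.ext_iff]

lemma mem_boundaryFrom_self (g : List Bool) (p : Pos) : (p, true) ∈ boundaryFrom g p := by
  cases g with
  | nil => simp [boundaryFrom_nil, tileEdges]
  | cons b g =>
    rw [boundaryFrom_cons]
    refine mem_union_left _ ?_
    cases b <;> simp [gluedEdge, tileEdges, Prod.ext_iff]

lemma mem_edgeVerts_oppositeEdge {b : Bool} {p v : Pos} (hvp : v ∈ tileVerts p)
    (hvs : v ∉ edgeVerts (gluedEdge b p)) : v ∈ edgeVerts (oppositeEdge b p) := by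
  rw [mem_tileVerts] at hvp
  rw [mem_edgeVerts] at hvs ⊢
  obtain ⟨a, c⟩ := v; obtain ⟨x, y⟩ := p
  cases b <;> simp [oppositeEdge, gluedEdge, Prod.ext_iff] at * <;> omega

lemma notMem_snakeVertsFrom_of_mem_edgeVerts_oppositeEdge {b : Bool} {g : List Bool} {p v : Pos}
    (hv : v ∈ edgeVerts (oppositeEdge b p)) : v ∉ snakeVertsFrom g (nextTile b p) := fun h => by
  have hle := le_of_mem_snakeVertsFrom h
  rw [mem_edgeVerts] at hv
  obtain ⟨a, c⟩ := v; obtain ⟨x, y⟩ := p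
  cases b <;> simp [oppositeEdge, nextTile, Prod.le_def, Prod.ext_iff] at * <;> omega

lemma isPM_tileEdges_bottom_top (p : Pos) :
    IsPM (tileEdges p) {(p, true), ((p.1, p.2 + 1), true)} := by
  refine isPM_iff.mpr ⟨by simp [tileEdges, insert_subset_iff], fun v hv => ?_⟩
  obtain ⟨a, b⟩ := v; obtain ⟨x, y⟩ := p
  rw [← tileVerts, mem_tileVerts] at hv
  obtain ⟨h1 | h1, h2 | h2⟩ := hv <;> simp only at h1 h2 <;> subst h1 h2 <;>
    simp [degreeIn, edgeVerts, filter_insert, filter_singleton]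

lemma IsPM.insert_oppositeEdge {b : Bool} {g : List Bool} {p : Pos} {M : Finset SEdge}
    (hM : IsPM (snakeEdgesFrom g (nextTile b p)) M) :
    IsPM (snakeEdgesFrom (b :: g) p) (insert (oppositeEdge b p) M) := by
  set o := oppositeEdge b p
  rw [isPM_iff] at hM ⊢
  have hoM : o ∉ M := fun h =>
    notMem_snakeVertsFrom_of_mem_edgeVerts_oppositeEdge (g := g) (mem_insert_self o.1 _)
      (subset_biUnion_of_mem edgeVerts (hM.1 h) (mem_insert_self o.1 _))
  refine ⟨?_, fun v hv => ?_⟩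
  · rw [snakeEdgesFrom_cons]
    exact insert_subset (mem_union_left _ (mem_of_mem_erase (oppositeEdge_mem_erase_gluedEdge b p)))
      (hM.1.trans subset_union_right)
  rw [degreeIn_insert hoM]
  by_cases hvq : v ∈ snakeVertsFrom g (nextTile b p)
  · rw [hM.2 v hvq, if_neg fun h => notMem_snakeVertsFrom_of_mem_edgeVerts_oppositeEdge h hvq]
  · have hvp : v ∈ tileVerts p := by
      rw [← snakeVertsFrom, snakeVertsFrom_cons] at hv
      exact (mem_union.mp hv).resolve_right hvq
    have hvo : v ∈ edgeVerts o :=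
      mem_edgeVerts_oppositeEdge hvp fun h => hvq (edgeVerts_gluedEdge_subset b g p h)
    have hvM : v ∉ M.biUnion edgeVerts := fun h =>
      hvq (biUnion_subset_biUnion_of_subset_left _ hM.1 h)
    rw [degreeIn_eq_zero hvM, if_pos hvo]

lemma exists_isPM_subset_boundaryFrom :
    ∀ (g : List Bool) (p : Pos), ∃ M, IsPM (snakeEdgesFrom g p) M ∧ M ⊆ boundaryFrom g p
  | [], p => ⟨_, by simpa [snakeEdgesFrom_nil] using isPM_tileEdges_bottom_top p, by
      simp [boundaryFrom_nil, tileEdges, insert_subset_iff]⟩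
  | b :: g, p => by
    set q := nextTile b p
    set s := gluedEdge b p
    -- Of a boundary matching of the tail and its complement, one avoids the glued edge.
    obtain ⟨M, hM, hMB, hsM⟩ :
        ∃ M, IsPM (snakeEdgesFrom g q) M ∧ M ⊆ boundaryFrom g q ∧ s ∉ M := by
      obtain ⟨M, hM, hMB⟩ := exists_isPM_subset_boundaryFrom g q
      by_cases hsM : s ∈ M
      · exact ⟨_, hM.sdiff hMB (boundaryFrom_subset_snakeEdgesFrom g q)
          (degreeIn_boundaryFrom g q), sdiff_subset, fun h => (mem_sdiff.mp h).2 hsM⟩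
      · exact ⟨M, hM, hMB, hsM⟩
    refine ⟨_, hM.insert_oppositeEdge, ?_⟩
    rw [boundaryFrom_cons]
    exact insert_subset (mem_union_left _ (oppositeEdge_mem_erase_gluedEdge b p))
      fun e he => mem_union_right _
        (mem_erase.mpr ⟨fun h => hsM (h ▸ he : gluedEdge b p ∈ M), hMB he⟩)

lemma IsPM.boundary_sdiff {g : List Bool} {P : Finset SEdge} (hP : IsPM (snakeEdges g) P)
    (hPB : P ⊆ boundary g) : IsPM (snakeEdges g) (boundary g \ P) :=
  hP.sdiff hPB (boundaryFrom_subset_snakeEdgesFrom g (0, 0)) (degreeIn_boundaryFrom g (0, 0))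

lemma exists_isMinPM (g : List Bool) : ∃ P, IsMinPM g P := by
  obtain ⟨M, hM, hMB⟩ := exists_isPM_subset_boundaryFrom g (0, 0)
  by_cases h : ((0, 0), true) ∈ M
  · exact ⟨M, hM, hMB, h⟩
  · exact ⟨boundary g \ M, hM.boundary_sdiff hMB, sdiff_subset,
      mem_sdiff.mpr ⟨mem_boundaryFrom_self g (0, 0), h⟩⟩

/-- In any snake graph, the set of boundary edges decomposes as the disjoint union of two
perfect matchings: the minimal perfect matching `Pmin` (the boundary matching containing
the bottom edge of the first tile) and the maximal perfect matching `Pmax`; in particular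
`Pmin ∪ Pmax` is the set of all boundary edges and `Pmin ∩ Pmax = ∅`. -/
theorem boundary_decomposes_into_min_and_max_matching (g : List Bool) :
    ∃ Pmin Pmax : Finset SEdge,
      IsMinPM g Pmin ∧
      IsPM (snakeEdges g) Pmax ∧ Pmax = boundary g \ Pmin ∧
      Pmin ∪ Pmax = boundary g ∧ Pmin ∩ Pmax = ∅ := by
  obtain ⟨P, hP, hPB, hP₀⟩ := exists_isMinPM g
  exact ⟨P, boundary g \ P, ⟨hP, hPB, hP₀⟩, hP.boundary_sdiff hPB, rfl,
    union_sdiff_of_subset hPB, inter_sdiff_self P _⟩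
end

section
/- Every snake graph admits at least two perfect matchings consisting entirely of boundary edges, and these are the only perfect matchings consisting entirely of boundary edges. -/
/-!
Induction on the number of tiles, counting the boundary perfect matchings that contain a given
one of the two edges at the south-west corner `p` of the first tile; the claim is that there is
exactly one for each. A single tile is a 4-cycle, which has one perfect matching through each
side. Otherwise let `e` be the edge along which the first tile is glued to the rest; `e` is not a
boundary edge, and it is one of the two corner edges of the rest. A boundary perfect matching
containing the side of the first tile opposite to `e` restricts to one of the rest avoiding `e`.
One containing the other corner edge at `p` contains both sides parallel to `e`, and replacing
them by `e` gives one of the rest containing `e`. Both correspondences are bijections.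
-/

namespace SnakeGraph

open Finset

section ExactCover

variable {α β : Type*} [DecidableEq α]

def IsExactCover (f : β → Finset α) (W : Finset α) (P : Finset β) : Prop :=
  P.biUnion f = W ∧ (P : Set β).PairwiseDisjoint f

variable {f : β → Finset α} {W : Finset α} {P : Finset β} {e e' : β} {v : α}

theorem isExactCover_iff :
    IsExactCover f W P ↔ (∀ e ∈ P, f e ⊆ W) ∧ ∀ v ∈ W, ∃! e, e ∈ P ∧ v ∈ f e := by
  constructor
  · rintro ⟨rfl, hd⟩
    refine ⟨fun e he => subset_biUnion_of_mem f he, fun v hv => ?_⟩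
    obtain ⟨e, he, hve⟩ := mem_biUnion.1 hv
    exact ⟨e, ⟨he, hve⟩, fun e' ⟨he', hve'⟩ => hd.elim_finset he' he v hve' hve⟩
  · rintro ⟨hsub, huniq⟩
    refine ⟨subset_antisymm (biUnion_subset.2 hsub) fun v hv => ?_,
      fun e he e' he' hne => ?_⟩
    · obtain ⟨e, ⟨he, hve⟩, -⟩ := huniq v hv
      exact mem_biUnion.2 ⟨e, he, hve⟩
    · refine disjoint_left.2 fun v hv hv' => hne ?_
      exact (huniq v (hsub e he hv)).unique ⟨he, hv⟩ ⟨he', hv'⟩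

namespace IsExactCover

theorem subset (h : IsExactCover f W P) (he : e ∈ P) : f e ⊆ W :=
  h.1 ▸ subset_biUnion_of_mem f he

theorem exists_mem (h : IsExactCover f W P) (hv : v ∈ W) : ∃ e ∈ P, v ∈ f e :=
  mem_biUnion.1 (h.1 ▸ hv)

theorem eq_of_not_disjoint (h : IsExactCover f W P) (he : e ∈ P) (he' : e' ∈ P)
    (hd : ¬Disjoint (f e) (f e')) : e = e' :=
  h.2.elim he he' hd

theorem singleton (e : β) : IsExactCover f (f e) {e} :=
  ⟨singleton_biUnion, by simp⟩

theorem insert [DecidableEq β] (h : IsExactCover f W P) (hd : Disjoint (f e) W) :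
    IsExactCover f (f e ∪ W) (insert e P) := by
  refine ⟨biUnion_insert.trans (by rw [h.1]), ?_⟩
  rw [coe_insert]
  exact h.2.insert fun e' he' _ => hd.mono_right (h.subset he')

theorem erase [DecidableEq β] (h : IsExactCover f W P) (he : e ∈ P) :
    IsExactCover f (W \ f e) (P.erase e) := by
  refine ⟨?_, h.2.subset (by simp)⟩
  ext v
  simp only [mem_biUnion, mem_erase, mem_sdiff, ← h.1]
  constructor
  · rintro ⟨e', ⟨hne, he'⟩, hv⟩
    exact ⟨⟨e', he', hv⟩, fun hv' => hne (h.2.elim_finset he' he v hv hv')⟩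
  · rintro ⟨⟨e', he', hv⟩, hv'⟩
    exact ⟨e', ⟨by rintro rfl; exact hv' hv, he'⟩, hv⟩

end IsExactCover

end ExactCover

section Geometry

def shift (b : Bool) (p : Pos) : Pos := if b then (p.1 + 1, p.2) else (p.1, p.2 + 1)

def edgesFrom (g : List Bool) (p : Pos) : Finset SEdge :=
  (tilePosFrom g p).toFinset.biUnion tileEdges

def vertsFrom (g : List Bool) (p : Pos) : Finset Pos := (edgesFrom g p).biUnion edgeVerts

def tileCount (g : List Bool) (p : Pos) (e : SEdge) : ℕ :=
  (tilePosFrom g p).countP fun q => decide (e ∈ tileEdges q)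

def boundaryFrom (g : List Bool) (p : Pos) : Finset SEdge :=
  (edgesFrom g p).filter fun e => tileCount g p e = 1

variable {b c : Bool} {g : List Bool} {p q v : Pos} {e : SEdge}

theorem tilePosFrom_cons : tilePosFrom (b :: g) p = p :: tilePosFrom g (shift b p) := rfl

theorem edgeVerts_mk (q : Pos) (c : Bool) : edgeVerts (q, c) = {q, shift c q} := rfl

theorem le_shift (b : Bool) (p : Pos) : p ≤ shift b p := by
  cases b <;> simp [shift, Prod.le_def]

theorem not_shift_le (b : Bool) (p : Pos) : ¬shift b p ≤ p := by
  cases b <;> simp [shift, Prod.le_def]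

theorem shift_ne (b : Bool) (p : Pos) : shift b p ≠ p :=
  fun h => not_shift_le b p h.le

theorem not_shift_le_shift_not (b : Bool) (p : Pos) : ¬shift b p ≤ shift (!b) p := by
  cases b <;> simp [shift, Prod.le_def]

theorem shift_comm (b c : Bool) (p : Pos) : shift b (shift c p) = shift c (shift b p) := by
  cases b <;> cases c <;> simp [shift]

theorem tileEdges_eq (p : Pos) (c : Bool) :
    tileEdges p = {(p, c), (shift (!c) p, c), (p, !c), (shift c p, !c)} := by
  cases c <;> ext e <;> simp [tileEdges, shift] <;> tauto

theorem mk_mem_tileEdges (q : Pos) (c : Bool) : (q, c) ∈ tileEdges q := by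
  cases c <;> simp [tileEdges]

/- When the next tile is glued in direction `b`, the edge it shares with the tile at `p` is
`(shift b p, !b)` (the glue), the opposite side is `(p, !b)` (the back), and the other two sides
`(p, b)` and `(shift (!b) p, b)` are parallel to the glue. -/
theorem glue_mem_tileEdges (b : Bool) (p : Pos) : (shift b p, !b) ∈ tileEdges p := by
  cases b <;> simp [tileEdges, shift]

theorem opposite_mem_tileEdges (p : Pos) (c : Bool) : (shift (!c) p, c) ∈ tileEdges p := by
  rw [tileEdges_eq p c]
  simp

theorem mk_ne_glue : (p, c) ≠ (shift b p, !b) :=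
  fun h => not_shift_le b p (congrArg Prod.fst h).ge

theorem tileVerts_eq (p : Pos) (c : Bool) :
    tileVerts p = edgeVerts (p, c) ∪ edgeVerts (shift (!c) p, c) := by
  rw [tileVerts, tileEdges_eq p c]
  ext v
  simp only [biUnion_insert, singleton_biUnion, edgeVerts_mk, mem_union, mem_insert,
    mem_singleton, shift_comm c (!c)]
  tauto

theorem disjoint_edgeVerts_opposite (p : Pos) (c : Bool) :
    Disjoint (edgeVerts (p, c)) (edgeVerts (shift (!c) p, c)) := by
  cases c <;> simp [edgeVerts_mk, shift, Prod.ext_iff]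

theorem not_disjoint_edgeVerts (he : e ∈ tileEdges p) (hne : e ≠ (shift (!c) p, c)) :
    ¬Disjoint (edgeVerts (p, c)) (edgeVerts e) := by
  rw [tileEdges_eq p c] at he
  simp only [mem_insert, mem_singleton] at he
  rcases he with rfl | rfl | rfl | rfl
  · simp [edgeVerts_mk]
  · exact absurd rfl hne
  · simp [edgeVerts_mk]
  · rw [not_disjoint_iff]
    exact ⟨shift c p, by simp [edgeVerts_mk]⟩

theorem shift_not_notMem_edgeVerts (p : Pos) (c : Bool) :
    shift (!c) p ∉ edgeVerts (p, c) := by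
  cases c <;> simp [edgeVerts_mk, shift, Prod.ext_iff]

theorem le_of_mem_tilePosFrom (h : q ∈ tilePosFrom g p) : p ≤ q := by
  induction g generalizing p with
  | nil => simp_all [tilePosFrom]
  | cons b g ih =>
    rcases List.mem_cons.1 h with rfl | h
    · exact le_rfl
    · exact (le_shift b p).trans (ih h)

theorem mem_edgesFrom : e ∈ edgesFrom g p ↔ ∃ q ∈ tilePosFrom g p, e ∈ tileEdges q := by
  simp [edgesFrom]

theorem le_of_mem_tileEdges (h : e ∈ tileEdges q) : q ≤ e.1 := by
  rw [tileEdges_eq q true] at h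
  simp only [mem_insert, mem_singleton] at h
  rcases h with rfl | rfl | rfl | rfl <;> simp [le_shift]

theorem le_of_mem_edgesFrom (h : e ∈ edgesFrom g p) : p ≤ e.1 := by
  obtain ⟨q, hq, he⟩ := mem_edgesFrom.1 h
  exact (le_of_mem_tilePosFrom hq).trans (le_of_mem_tileEdges he)

theorem le_of_mem_vertsFrom (h : v ∈ vertsFrom g p) : p ≤ v := by
  obtain ⟨⟨q, c⟩, he, hv⟩ := mem_biUnion.1 h
  have hq := le_of_mem_edgesFrom he
  rw [edgeVerts_mk, mem_insert, mem_singleton] at hv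
  rcases hv with rfl | rfl
  · exact hq
  · exact hq.trans (le_shift c q)

theorem tileEdges_subset_edgesFrom (g : List Bool) (p : Pos) : tileEdges p ⊆ edgesFrom g p :=
  fun _ he => mem_edgesFrom.2 ⟨p, by cases g <;> simp [tilePosFrom], he⟩

theorem edgesFrom_nil (p : Pos) : edgesFrom [] p = tileEdges p := by
  simp [edgesFrom, tilePosFrom]

theorem edgesFrom_cons : edgesFrom (b :: g) p = tileEdges p ∪ edgesFrom g (shift b p) := by
  simp [edgesFrom, tilePosFrom_cons]

theorem notMem_edgesFrom_of_mem_tileEdges (he : e ∈ tileEdges p) (hne : e ≠ (shift b p, !b)) :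
    e ∉ edgesFrom g (shift b p) := by
  intro he'
  have hle := le_of_mem_edgesFrom he'
  rw [tileEdges_eq p b] at he
  simp only [mem_insert, mem_singleton] at he
  rcases he with rfl | rfl | rfl | rfl
  · exact not_shift_le b p hle
  · exact not_shift_le_shift_not b p hle
  · exact not_shift_le b p hle
  · exact hne rfl

theorem disjoint_back_vertsFrom : Disjoint (edgeVerts (p, !b)) (vertsFrom g (shift b p)) := by
  rw [edgeVerts_mk, disjoint_left]
  intro v hv hv'
  have hle := le_of_mem_vertsFrom hv'
  simp only [mem_insert, mem_singleton] at hv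
  rcases hv with rfl | rfl
  · exact not_shift_le b v hle
  · exact not_shift_le_shift_not b p hle

theorem glue_mem_edgesFrom (b : Bool) (g : List Bool) (p : Pos) :
    (shift b p, !b) ∈ edgesFrom g (shift b p) :=
  tileEdges_subset_edgesFrom g _ (mk_mem_tileEdges _ _)

theorem glue_subset_vertsFrom (b : Bool) (g : List Bool) (p : Pos) :
    edgeVerts (shift b p, !b) ⊆ vertsFrom g (shift b p) :=
  subset_biUnion_of_mem _ (glue_mem_edgesFrom b g p)

theorem vertsFrom_nil (p : Pos) : vertsFrom [] p = tileVerts p := by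
  rw [vertsFrom, edgesFrom_nil, tileVerts]

theorem vertsFrom_cons_eq_tileVerts_union :
    vertsFrom (b :: g) p = tileVerts p ∪ vertsFrom g (shift b p) := by
  rw [vertsFrom, edgesFrom_cons, union_biUnion]
  rfl

theorem vertsFrom_cons :
    vertsFrom (b :: g) p = edgeVerts (p, !b) ∪ vertsFrom g (shift b p) := by
  rw [vertsFrom_cons_eq_tileVerts_union, tileVerts_eq p (!b), Bool.not_not, union_assoc,
    union_eq_right.2 (glue_subset_vertsFrom b g p)]

theorem vertsFrom_sdiff_glue :
    vertsFrom g (shift b p) \ edgeVerts (shift b p, !b) =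
      vertsFrom g (shift b p) \ tileVerts p := by
  rw [tileVerts_eq p (!b), Bool.not_not, sdiff_union_distrib,
    sdiff_eq_self_of_disjoint disjoint_back_vertsFrom.symm, inter_eq_right.2 sdiff_subset]

end Geometry

section Boundary

variable {b c : Bool} {g : List Bool} {p : Pos} {e : SEdge}

theorem tileCount_cons :
    tileCount (b :: g) p e = tileCount g (shift b p) e + if e ∈ tileEdges p then 1 else 0 := by
  simp [tileCount, tilePosFrom_cons, List.countP_cons]

theorem tileCount_eq_zero_iff : tileCount g p e = 0 ↔ e ∉ edgesFrom g p := by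
  simp [tileCount, List.countP_eq_zero, mem_edgesFrom]

theorem mem_boundaryFrom : e ∈ boundaryFrom g p ↔ tileCount g p e = 1 := by
  rw [boundaryFrom, mem_filter, and_iff_right_iff_imp]
  intro h
  by_contra he
  rw [← tileCount_eq_zero_iff] at he
  omega

theorem boundaryFrom_subset_edgesFrom (g : List Bool) (p : Pos) :
    boundaryFrom g p ⊆ edgesFrom g p :=
  filter_subset _ _

theorem boundaryFrom_nil (p : Pos) : boundaryFrom [] p = tileEdges p := by
  ext e
  simp [mem_boundaryFrom, tileCount, tilePosFrom]

theorem mem_boundaryFrom_cons :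
    e ∈ boundaryFrom (b :: g) p ↔
      e ≠ (shift b p, !b) ∧ (e ∈ tileEdges p ∨ e ∈ boundaryFrom g (shift b p)) := by
  have hglue := glue_mem_tileEdges b p
  simp only [mem_boundaryFrom, tileCount_cons]
  by_cases he : e ∈ tileEdges p
  · by_cases hg : e = (shift b p, !b)
    · subst hg
      have : tileCount g (shift b p) (shift b p, !b) ≠ 0 :=
        tileCount_eq_zero_iff.not.2 (not_not.2 (glue_mem_edgesFrom b g p))
      simp [hglue, this]
    · have : tileCount g (shift b p) e = 0 :=
        tileCount_eq_zero_iff.2 (notMem_edgesFrom_of_mem_tileEdges he hg)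
      simp [he, hg, this]
  · have hg : e ≠ (shift b p, !b) := by rintro rfl; exact he hglue
    simp [he, hg]

theorem mk_mem_boundaryFrom (g : List Bool) (p : Pos) (c : Bool) :
    (p, c) ∈ boundaryFrom g p := by
  have hp := mk_mem_tileEdges p c
  cases g with
  | nil => rw [boundaryFrom_nil]; exact hp
  | cons b g =>
    exact mem_boundaryFrom_cons.2 ⟨mk_ne_glue, Or.inl hp⟩

theorem fst_eq_of_mem_edgesFrom (he : e ∈ edgesFrom g p) (hp : p ∈ edgeVerts e) : e.1 = p := by
  obtain ⟨q, c⟩ := e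
  have hle : p ≤ q := le_of_mem_edgesFrom he
  rw [edgeVerts_mk, mem_insert, mem_singleton] at hp
  rcases hp with rfl | rfl
  · rfl
  · exact absurd hle (not_shift_le c q)

theorem isPM_and_subset_boundary_iff {P : Finset SEdge} :
    IsPM (snakeEdges g) P ∧ P ⊆ boundary g ↔
      P ⊆ boundaryFrom g (0, 0) ∧ IsExactCover edgeVerts (vertsFrom g (0, 0)) P := by
  have hB : boundary g ⊆ snakeEdges g := boundaryFrom_subset_edgesFrom g (0, 0)
  rw [IsPM, and_comm, ← and_assoc, isExactCover_iff]
  constructor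
  · rintro ⟨⟨hPB, -⟩, hcov⟩
    exact ⟨hPB, fun e he => subset_biUnion_of_mem _ (hB (hPB he)), hcov⟩
  · rintro ⟨hPB, -, hcov⟩
    exact ⟨⟨hPB, hPB.trans hB⟩, hcov⟩

end Boundary

section BoundaryMatchings

def boundaryPMs (g : List Bool) (p : Pos) : Set (Finset SEdge) :=
  {P | P ⊆ boundaryFrom g p ∧ IsExactCover edgeVerts (vertsFrom g p) P}

variable {b c : Bool} {g : List Bool} {p : Pos} {W : Finset Pos} {P Q : Finset SEdge}
  {e : SEdge}

theorem mk_mem_iff_of_mem_boundaryPMs (hP : P ∈ boundaryPMs g p) (c : Bool) :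
    (p, c) ∈ P ↔ (p, !c) ∉ P := by
  constructor
  · intro hc hnc
    have := hP.2.eq_of_not_disjoint hc hnc (not_disjoint_iff.2 ⟨p, by simp [edgeVerts_mk]⟩)
    simp at this
  · intro hnc
    have hp : p ∈ vertsFrom g p :=
      subset_biUnion_of_mem _ (tileEdges_subset_edgesFrom g p (mk_mem_tileEdges p c))
        (by simp [edgeVerts_mk])
    obtain ⟨⟨q, d⟩, he, hv⟩ := hP.2.exists_mem hp
    obtain rfl : q = p := fst_eq_of_mem_edgesFrom (boundaryFrom_subset_edgesFrom g p (hP.1 he)) hv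
    cases c <;> cases d <;> simp_all

theorem opposite_mem (hP : IsExactCover edgeVerts W P) (hc : (p, c) ∈ P) (he : e ∈ P)
    (het : e ∈ tileEdges p) (hv : shift (!c) p ∈ edgeVerts e) : (shift (!c) p, c) ∈ P := by
  by_contra hopp
  have hne : e ≠ (shift (!c) p, c) := by rintro rfl; exact hopp he
  obtain rfl := hP.eq_of_not_disjoint hc he (not_disjoint_edgeVerts het hne)
  exact shift_not_notMem_edgeVerts p c hv

theorem sep_boundaryPMs_nil_eq (p : Pos) (c : Bool) :
    {P ∈ boundaryPMs [] p | (p, c) ∈ P} = {{(p, c), (shift (!c) p, c)}} := by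
  ext P
  simp only [Set.mem_sep_iff, Set.mem_singleton_iff]
  constructor
  · rintro ⟨⟨hsub, hcov⟩, hc⟩
    rw [boundaryFrom_nil] at hsub
    have hv : shift (!c) p ∈ vertsFrom [] p := by
      rw [vertsFrom_nil, tileVerts_eq p c]
      simp [edgeVerts_mk]
    obtain ⟨e, he, hve⟩ := hcov.exists_mem hv
    have hopp := opposite_mem hcov hc he (hsub he) hve
    refine subset_antisymm (fun e he => ?_) (insert_subset hc (singleton_subset_iff.2 hopp))
    by_cases hne : e = (shift (!c) p, c)
    · simp [hne]
    · simp [hcov.eq_of_not_disjoint hc he (not_disjoint_edgeVerts (hsub he) hne)]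
  · rintro rfl
    refine ⟨⟨?_, ?_⟩, mem_insert_self _ _⟩
    · rw [boundaryFrom_nil, tileEdges_eq p c]
      intro e he
      simp only [mem_insert, mem_singleton] at he ⊢
      tauto
    · rw [vertsFrom_nil, tileVerts_eq p c]
      exact (IsExactCover.singleton _).insert (disjoint_edgeVerts_opposite p c)

theorem glue_notMem (hP : P ∈ boundaryPMs (b :: g) p) : (shift b p, !b) ∉ P :=
  fun h => (mem_boundaryFrom_cons.1 (hP.1 h)).1 rfl

theorem notMem_of_mem_boundaryPMs_shift (hQ : Q ∈ boundaryPMs g (shift b p))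
    (he : e ∈ tileEdges p) (hne : e ≠ (shift b p, !b)) : e ∉ Q :=
  fun h => notMem_edgesFrom_of_mem_tileEdges he hne (boundaryFrom_subset_edgesFrom _ _ (hQ.1 h))

theorem insert_back_mem_boundaryPMs (hQ : Q ∈ boundaryPMs g (shift b p))
    (hglue : (shift b p, !b) ∉ Q) : insert (p, !b) Q ∈ boundaryPMs (b :: g) p := by
  refine ⟨fun e he => mem_boundaryFrom_cons.2 ?_, ?_⟩
  · rcases mem_insert.1 he with rfl | he
    · exact ⟨mk_ne_glue, Or.inl (mk_mem_tileEdges p _)⟩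
    · exact ⟨by rintro rfl; exact hglue he, Or.inr (hQ.1 he)⟩
  · rw [vertsFrom_cons]
    exact hQ.2.insert disjoint_back_vertsFrom

theorem erase_back_mem_boundaryPMs (hP : P ∈ boundaryPMs (b :: g) p) (hback : (p, !b) ∈ P) :
    P.erase (p, !b) ∈ boundaryPMs g (shift b p) := by
  refine ⟨fun e he => ?_, ?_⟩
  · obtain ⟨hne, heP⟩ := mem_erase.1 he
    obtain ⟨hglue, htile | hsub⟩ := mem_boundaryFrom_cons.1 (hP.1 heP)
    · have hadj := not_disjoint_edgeVerts (c := !b) htile (by simpa using hglue)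
      exact absurd (hP.2.eq_of_not_disjoint heP hback fun hd => hadj hd.symm) hne
    · exact hsub
  · have := hP.2.erase hback
    rwa [vertsFrom_cons, union_sdiff_cancel_left disjoint_back_vertsFrom] at this

theorem bijOn_insert_back :
    Set.BijOn (insert (p, !b)) {Q ∈ boundaryPMs g (shift b p) | (shift b p, b) ∈ Q}
      {P ∈ boundaryPMs (b :: g) p | (p, !b) ∈ P} := by
  refine Set.InvOn.bijOn (f' := fun P => P.erase (p, !b))
    ⟨fun Q hQ => erase_insert (notMem_of_mem_boundaryPMs_shift hQ.1 (mk_mem_tileEdges p _)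
      mk_ne_glue), fun P hP => insert_erase hP.2⟩
    (fun Q hQ => ⟨?_, mem_insert_self _ _⟩) (fun P hP => ⟨?_, ?_⟩)
  · exact insert_back_mem_boundaryPMs hQ.1 ((mk_mem_iff_of_mem_boundaryPMs hQ.1 b).1 hQ.2)
  · exact erase_back_mem_boundaryPMs hP.1 hP.2
  · exact (mk_mem_iff_of_mem_boundaryPMs (erase_back_mem_boundaryPMs hP.1 hP.2) b).2
      fun h => glue_notMem hP.1 (mem_of_mem_erase h)

theorem opposite_parallel_mem (hP : P ∈ boundaryPMs (b :: g) p) (hpar : (p, b) ∈ P) :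
    (shift (!b) p, b) ∈ P := by
  have hback : shift (!b) p ∈ edgeVerts (p, !b) := by simp [edgeVerts_mk]
  obtain ⟨e, he, hve⟩ := hP.2.exists_mem (vertsFrom_cons ▸ mem_union_left _ hback)
  refine opposite_mem hP.2 hpar he ?_ hve
  refine (mem_boundaryFrom_cons.1 (hP.1 he)).2.resolve_right fun hsub => ?_
  have hsub := subset_biUnion_of_mem edgeVerts (boundaryFrom_subset_edgesFrom _ _ hsub) hve
  exact disjoint_left.1 disjoint_back_vertsFrom hback hsub

theorem insert_parallels_mem_boundaryPMs (hQ : Q ∈ boundaryPMs g (shift b p))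
    (hglue : (shift b p, !b) ∈ Q) :
    insert (p, b) (insert (shift (!b) p, b) (Q.erase (shift b p, !b))) ∈
      boundaryPMs (b :: g) p := by
  refine ⟨fun e he => mem_boundaryFrom_cons.2 ?_, ?_⟩
  · simp only [mem_insert, mem_erase] at he
    rcases he with rfl | rfl | ⟨hne, he⟩
    · exact ⟨mk_ne_glue, Or.inl (mk_mem_tileEdges p b)⟩
    · exact ⟨by simp, Or.inl (opposite_mem_tileEdges p b)⟩
    · exact ⟨hne, Or.inr (hQ.1 he)⟩
  · have hpar1 : edgeVerts (p, b) ⊆ tileVerts p := tileVerts_eq p b ▸ subset_union_left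
    have hpar2 : edgeVerts (shift (!b) p, b) ⊆ tileVerts p := tileVerts_eq p b ▸ subset_union_right
    have h := hQ.2.erase hglue
    rw [vertsFrom_sdiff_glue] at h
    have h' := (h.insert (disjoint_sdiff.mono_left hpar2)).insert
      (disjoint_union_right.2 ⟨disjoint_edgeVerts_opposite p b, disjoint_sdiff.mono_left hpar1⟩)
    rwa [← union_assoc, ← tileVerts_eq p b, union_sdiff_self_eq_union,
      ← vertsFrom_cons_eq_tileVerts_union] at h'

theorem insert_glue_mem_boundaryPMs (hP : P ∈ boundaryPMs (b :: g) p) (hpar : (p, b) ∈ P) :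
    insert (shift b p, !b) ((P.erase (p, b)).erase (shift (!b) p, b)) ∈
      boundaryPMs g (shift b p) := by
  have hback : (p, !b) ∉ P := (mk_mem_iff_of_mem_boundaryPMs hP b).1 hpar
  refine ⟨fun e he => ?_, ?_⟩
  · rcases mem_insert.1 he with rfl | he
    · exact mk_mem_boundaryFrom g _ _
    · simp only [mem_erase] at he
      obtain ⟨hne2, hne1, heP⟩ := he
      obtain ⟨hglue, htile | hsub⟩ := mem_boundaryFrom_cons.1 (hP.1 heP)
      · rw [tileEdges_eq p b] at htile
        simp only [mem_insert, mem_singleton] at htile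
        rcases htile with rfl | rfl | rfl | rfl
        exacts [absurd rfl hne1, absurd rfl hne2, absurd heP hback, absurd rfl hglue]
      · exact hsub
  · have hpar2 : (shift (!b) p, b) ∈ P.erase (p, b) :=
      mem_erase.2 ⟨by simpa using shift_ne (!b) p, opposite_parallel_mem hP hpar⟩
    have h := (hP.2.erase hpar).erase hpar2
    rw [sdiff_sdiff_left, sup_eq_union, ← tileVerts_eq p b, vertsFrom_cons_eq_tileVerts_union,
      union_sdiff_left, ← vertsFrom_sdiff_glue] at h
    have h' := h.insert disjoint_sdiff
    rwa [union_sdiff_of_subset (glue_subset_vertsFrom b g p)] at h'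

theorem bijOn_insert_parallels :
    Set.BijOn (fun Q => insert (p, b) (insert (shift (!b) p, b) (Q.erase (shift b p, !b))))
      {Q ∈ boundaryPMs g (shift b p) | (shift b p, !b) ∈ Q}
      {P ∈ boundaryPMs (b :: g) p | (p, b) ∈ P} := by
  have hpar : (shift (!b) p, b) ≠ (p, b) := by simpa using shift_ne (!b) p
  refine Set.InvOn.bijOn
    (f' := fun P => insert (shift b p, !b) ((P.erase (p, b)).erase (shift (!b) p, b)))
    ⟨fun Q hQ => ?_, fun P hP => ?_⟩
    (fun Q hQ => ⟨insert_parallels_mem_boundaryPMs hQ.1 hQ.2, mem_insert_self _ _⟩)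
    (fun P hP => ⟨insert_glue_mem_boundaryPMs hP.1 hP.2, mem_insert_self _ _⟩)
  · have hpar2 : (shift (!b) p, b) ∉ Q.erase (shift b p, !b) := fun h =>
      notMem_of_mem_boundaryPMs_shift hQ.1 (opposite_mem_tileEdges p b) (by simp)
        (mem_of_mem_erase h)
    have hpar1 : (p, b) ∉ insert (shift (!b) p, b) (Q.erase (shift b p, !b)) := by
      rw [mem_insert, not_or]
      exact ⟨hpar.symm, fun h => notMem_of_mem_boundaryPMs_shift hQ.1 (mk_mem_tileEdges p b)
        mk_ne_glue (mem_of_mem_erase h)⟩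
    dsimp only
    rw [erase_insert hpar1, erase_insert hpar2, insert_erase hQ.2]
  · have hglue : (shift b p, !b) ∉ (P.erase (p, b)).erase (shift (!b) p, b) :=
      fun h => glue_notMem hP.1 (mem_of_mem_erase (mem_of_mem_erase h))
    dsimp only
    rw [erase_insert hglue,
      insert_erase (mem_erase.2 ⟨hpar, opposite_parallel_mem hP.1 hP.2⟩), insert_erase hP.2]

theorem ncard_sep_mk_mem_boundaryPMs (g : List Bool) (p : Pos) (c : Bool) :
    {P ∈ boundaryPMs g p | (p, c) ∈ P}.ncard = 1 := by
  induction g generalizing p c with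
  | nil => rw [sep_boundaryPMs_nil_eq, Set.ncard_singleton]
  | cons b g ih =>
    obtain rfl | rfl : c = !b ∨ c = b := by cases b <;> cases c <;> simp
    · rw [← bijOn_insert_back.ncard_eq, ih]
    · rw [← bijOn_insert_parallels.ncard_eq, ih]

theorem ncard_boundaryPMs (g : List Bool) (p : Pos) : (boundaryPMs g p).ncard = 2 := by
  have hsplit : boundaryPMs g p =
      {P ∈ boundaryPMs g p | (p, true) ∈ P} ∪ {P ∈ boundaryPMs g p | (p, false) ∈ P} := by
    ext P
    simp only [Set.mem_union, Set.mem_sep_iff]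
    constructor
    · intro hP
      by_cases h : (p, true) ∈ P
      · exact Or.inl ⟨hP, h⟩
      · exact Or.inr ⟨hP, (mk_mem_iff_of_mem_boundaryPMs hP false).2 h⟩
    · rintro (h | h) <;> exact h.1
  have hdisj : Disjoint {P ∈ boundaryPMs g p | (p, true) ∈ P}
      {P ∈ boundaryPMs g p | (p, false) ∈ P} :=
    Set.disjoint_left.2 fun P h1 h2 => (mk_mem_iff_of_mem_boundaryPMs h1.1 true).1 h1.2 h2.2
  have hfin (c : Bool) : {P ∈ boundaryPMs g p | (p, c) ∈ P}.Finite :=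
    Set.finite_of_ncard_ne_zero (by rw [ncard_sep_mk_mem_boundaryPMs]; norm_num)
  rw [hsplit, Set.ncard_union_eq hdisj (hfin true) (hfin false), ncard_sep_mk_mem_boundaryPMs,
    ncard_sep_mk_mem_boundaryPMs]

end BoundaryMatchings

end SnakeGraph

/-- Every snake graph admits at least two perfect matchings consisting entirely of
boundary edges, and these are the only perfect matchings consisting entirely of
boundary edges: there are exactly two such matchings. -/
theorem exactly_two_boundary_matchings (g : List Bool) :
    2 ≤ {P : Finset SEdge | IsPM (snakeEdges g) P ∧ P ⊆ boundary g}.ncard ∧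
    {P : Finset SEdge | IsPM (snakeEdges g) P ∧ P ⊆ boundary g}.ncard = 2 := by
  have h : {P : Finset SEdge | IsPM (snakeEdges g) P ∧ P ⊆ boundary g} =
      SnakeGraph.boundaryPMs g (0, 0) :=
    Set.ext fun _ => SnakeGraph.isPM_and_subset_boundary_iff
  rw [h, SnakeGraph.ncard_boundaryPMs]
  exact ⟨le_rfl, rfl⟩
end

section
/- Let H be a union of snake subgraphs of a snake graph G arising as the symmetric difference P ⊖ P_min for some perfect matching P of G. Then the restriction of P_min to each connected component of H is the minimal perfect matching of that component; consequently, replacing P_min restricted to H by any perfect matching of H inside P_min yields a perfect matching of G. -/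
/-- The tiles of the snake subgraph of `g` consisting of the consecutive tiles
`a, a+1, …, b`. -/
def subTiles (g : List Bool) (a b : ℕ) : List Pos := ((snakeTiles g).drop a).take (b + 1 - a)

/-- The edge set of the snake subgraph of `g` on the consecutive tiles `a, …, b`. -/
def subEdges (g : List Bool) (a b : ℕ) : Finset SEdge :=
  (subTiles g a b).toFinset.biUnion tileEdges

/-- The boundary cycle of the snake subgraph on tiles `a, …, b`: its edges lying in
exactly one of these tiles. -/
def subBoundary (g : List Bool) (a b : ℕ) : Finset SEdge :=
  (subEdges g a b).filter
    (fun e => (subTiles g a b).countP (fun p => decide (e ∈ tileEdges p)) = 1)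


/-!
Every vertex of a snake graph lies on exactly two boundary edges. At a vertex of a component
`H_i` of `P ⊖ Pmin` both boundary edges of `H_i` lie in `P ⊖ Pmin` and at most one of them is in
`P`, so the `Pmin`-edge at that vertex is a boundary edge of `H_i`; thus `Pmin` restricts to a
perfect matching of `H_i` by boundary edges. Two components cannot share a vertex, since it would
lie on four edges of `P ∪ Pmin`. Hence no `Pmin`-edge leaves `H`, and `Pmin` may be exchanged on
each component for any perfect matching of it.
-/

structure IsSnakeList (L : List Pos) (s : ℤ) : Prop where
  add_getElem (i : ℕ) (hi : i < L.length) : L[i].1 + L[i].2 = s + i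
  getElem_succ (i : ℕ) (hi : i + 1 < L.length) :
    L[i + 1] = (L[i].1 + 1, L[i].2) ∨ L[i + 1] = (L[i].1, L[i].2 + 1)

namespace IsSnakeList

variable {L : List Pos} {s : ℤ}

lemma drop (h : IsSnakeList L s) (a : ℕ) : IsSnakeList (L.drop a) (s + a) where
  add_getElem i hi := by
    rw [List.getElem_drop, h.add_getElem (a + i) (by simp at hi; omega)]
    push_cast; ring
  getElem_succ i hi := by
    simpa only [List.getElem_drop, Nat.add_assoc] using
      h.getElem_succ (a + i) (by simp at hi; omega)

lemma take (h : IsSnakeList L s) (n : ℕ) : IsSnakeList (L.take n) s where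
  add_getElem i hi := by
    rw [List.getElem_take]; exact h.add_getElem i (by simp at hi; omega)
  getElem_succ i hi := by
    simpa only [List.getElem_take] using h.getElem_succ i (by simp at hi; omega)

lemma exists_getElem_eq (h : IsSnakeList L s) {t : Pos} (ht : t ∈ L) :
    ∃ i, ∃ hi : i < L.length, L[i] = t ∧ t.1 + t.2 = s + i := by
  obtain ⟨i, hi, rfl⟩ := List.mem_iff_getElem.1 ht
  exact ⟨i, hi, rfl, h.add_getElem i hi⟩

lemma eq_of_add_eq (h : IsSnakeList L s) {t t' : Pos} (ht : t ∈ L) (ht' : t' ∈ L)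
    (hs : t.1 + t.2 = t'.1 + t'.2) : t = t' := by
  obtain ⟨i, hi, rfl, hsi⟩ := h.exists_getElem_eq ht
  obtain ⟨j, hj, rfl, hsj⟩ := h.exists_getElem_eq ht'
  obtain rfl : i = j := by omega
  rfl

lemma nodup (h : IsSnakeList L s) : L.Nodup :=
  List.nodup_iff_injective_getElem.2 fun ⟨i, hi⟩ ⟨j, hj⟩ hij => by
    have := congrArg (fun t : Pos => t.1 + t.2) hij
    simp only [h.add_getElem i hi, h.add_getElem j hj] at this
    exact Fin.ext (by simp only; omega)

lemma right_mem_or_up_mem (h : IsSnakeList L s) {t t' : Pos} (ht : t ∈ L) (ht' : t' ∈ L)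
    (hs : t'.1 + t'.2 = t.1 + t.2 + 2) : (t.1 + 1, t.2) ∈ L ∨ (t.1, t.2 + 1) ∈ L := by
  obtain ⟨i, hi, rfl, hsi⟩ := h.exists_getElem_eq ht
  obtain ⟨j, hj, -, hsj⟩ := h.exists_getElem_eq ht'
  have hi1 : i + 1 < L.length := by omega
  rcases h.getElem_succ i hi1 with hst | hst <;> rw [← hst]
  exacts [.inl (List.getElem_mem hi1), .inr (List.getElem_mem hi1)]

lemma add_mem_Ico (h : IsSnakeList L s) {t : Pos} (ht : t ∈ L) :
    t.1 + t.2 ∈ Set.Ico s (s + L.length) := by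
  obtain ⟨i, hi, -, hsi⟩ := h.exists_getElem_eq ht
  constructor <;> omega

end IsSnakeList

lemma getElem_zero_tilePosFrom (g : List Bool) (p : Pos) (h : 0 < (tilePosFrom g p).length) :
    (tilePosFrom g p)[0] = p := by
  cases g <;> rfl

lemma isSnakeList_tilePosFrom : ∀ (g : List Bool) (p : Pos),
    IsSnakeList (tilePosFrom g p) (p.1 + p.2)
  | [], p => by
    constructor <;> intro i hi <;> simp only [tilePosFrom, List.length_singleton] at hi
    · simp [tilePosFrom, show i = 0 by omega]
    · omega
  | b :: g, p => by
    set p' : Pos := if b then (p.1 + 1, p.2) else (p.1, p.2 + 1)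
    have ih := isSnakeList_tilePosFrom g p'
    have hsum : p'.1 + p'.2 = p.1 + p.2 + 1 := by cases b <;> simp [p'] <;> ring
    constructor
    · rintro (_ | i) hi
      · simp [tilePosFrom]
      · simp only [tilePosFrom, List.getElem_cons_succ]
        rw [ih.add_getElem i _, hsum]; push_cast; ring
    · rintro (_ | i) hi
      · simp only [tilePosFrom, List.getElem_cons_succ, List.getElem_cons_zero,
          getElem_zero_tilePosFrom]
        cases b <;> simp
      · exact ih.getElem_succ i _

lemma isSnakeList_subTiles (g : List Bool) (a b : ℕ) : IsSnakeList (subTiles g a b) a := by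
  simpa [subTiles, snakeTiles] using ((isSnakeList_tilePosFrom g (0, 0)).drop a).take (b + 1 - a)

lemma add_mem_Icc_of_mem_subTiles {g : List Bool} {a b : ℕ} {t : Pos}
    (ht : t ∈ subTiles g a b) :
    t.1 + t.2 ∈ Set.Icc (a : ℤ) b := by
  have hlen : (subTiles g a b).length ≤ b + 1 - a := by simp [subTiles]
  obtain ⟨h₁, h₂⟩ := (isSnakeList_subTiles g a b).add_mem_Ico ht
  constructor <;> omega

lemma add_mem_Icc_of_mem_tileEdges {e : SEdge} {t : Pos} (h : e ∈ tileEdges t) :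
    e.1.1 + e.1.2 ∈ Set.Icc (t.1 + t.2) (t.1 + t.2 + 1) := by
  simp only [tileEdges, Finset.mem_insert, Finset.mem_singleton] at h
  rcases h with rfl | rfl | rfl | rfl <;> simp <;> omega

lemma disjoint_subEdges (g : List Bool) {a b c d : ℕ} (h : b + 1 < c ∨ d + 1 < a) :
    Disjoint (subEdges g a b) (subEdges g c d) := by
  simp only [Finset.disjoint_left, subEdges, Finset.mem_biUnion, List.mem_toFinset]
  rintro e ⟨t, ht, hte⟩ ⟨t', ht', hte'⟩
  obtain ⟨_, _⟩ := add_mem_Icc_of_mem_subTiles ht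
  obtain ⟨_, _⟩ := add_mem_Icc_of_mem_subTiles ht'
  obtain ⟨_, _⟩ := add_mem_Icc_of_mem_tileEdges hte
  obtain ⟨_, _⟩ := add_mem_Icc_of_mem_tileEdges hte'
  omega

lemma subEdges_subset_snakeEdges (g : List Bool) (a b : ℕ) : subEdges g a b ⊆ snakeEdges g :=
  Finset.biUnion_subset_biUnion_of_subset_left _ fun _ ht =>
    List.mem_toFinset.2 (List.mem_of_mem_drop (List.mem_of_mem_take (List.mem_toFinset.1 ht)))

lemma List.countP_eq_count_add_count {α : Type*} [BEq α] [LawfulBEq α] {p : α → Bool}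
    {a b : α} (hab : a ≠ b) (hp : ∀ t, p t ↔ t = a ∨ t = b) (L : List α) :
    L.countP p = L.count a + L.count b := by
  induction L with
  | nil => rfl
  | cons x l ih => simp only [List.countP_cons, List.count_cons, ih, hp]; grind

def vertexEdges (v : Pos) : Finset SEdge :=
  {(v, true), (v, false), ((v.1 - 1, v.2), true), ((v.1, v.2 - 1), false)}

lemma mem_edgeVerts_iff {v : Pos} {e : SEdge} : v ∈ edgeVerts e ↔ e ∈ vertexEdges v := by
  obtain ⟨⟨x, y⟩, d⟩ := e
  obtain ⟨a, b⟩ := v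
  cases d <;> simp [edgeVerts, vertexEdges, Prod.ext_iff] <;> omega

lemma mem_tileEdges_iff {e : SEdge} {t : Pos} :
    e ∈ tileEdges t ↔
      t = e.1 ∨ t = if e.2 then (e.1.1, e.1.2 - 1) else (e.1.1 - 1, e.1.2) := by
  obtain ⟨⟨x, y⟩, d⟩ := e
  obtain ⟨a, b⟩ := t
  cases d <;> simp [tileEdges, Prod.ext_iff] <;> omega

lemma mem_tileVerts_iff {v t : Pos} :
    v ∈ tileVerts t ↔
      t = v ∨ t = (v.1 - 1, v.2) ∨ t = (v.1, v.2 - 1) ∨ t = (v.1 - 1, v.2 - 1) := by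
  obtain ⟨a, b⟩ := v
  obtain ⟨x, y⟩ := t
  simp [tileVerts, tileEdges, edgeVerts, Prod.ext_iff]
  omega

def tilesBoundary (L : List Pos) : Finset SEdge :=
  (L.toFinset.biUnion tileEdges).filter
    (fun e => L.countP (fun p => decide (e ∈ tileEdges p)) = 1)

lemma filter_tilesBoundary_mem_edgeVerts (L : List Pos) (v : Pos) :
    (tilesBoundary L).filter (v ∈ edgeVerts ·) =
      (vertexEdges v).filter (fun e => L.countP (fun p => decide (e ∈ tileEdges p)) = 1) := by
  ext e
  simp only [tilesBoundary, Finset.mem_filter, mem_edgeVerts_iff]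
  refine ⟨fun ⟨⟨_, hc⟩, he⟩ => ⟨he, hc⟩, fun ⟨he, hc⟩ => ⟨⟨?_, hc⟩, he⟩⟩
  obtain ⟨t, ht, hte⟩ := List.countP_pos_iff.1 (hc ▸ Nat.one_pos)
  exact Finset.mem_biUnion.2 ⟨t, List.mem_toFinset.2 ht, of_decide_eq_true hte⟩

namespace IsSnakeList

variable {L : List Pos} {s : ℤ}

lemma countP_mem_tileEdges (h : IsSnakeList L s) (e : SEdge) :
    L.countP (fun p => decide (e ∈ tileEdges p)) =
      (if e.1 ∈ L then 1 else 0) +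
        (if (if e.2 then (e.1.1, e.1.2 - 1) else (e.1.1 - 1, e.1.2)) ∈ L then 1 else 0) := by
  rw [L.countP_eq_count_add_count _ fun t => by simpa using mem_tileEdges_iff]
  · rw [h.nodup.count, h.nodup.count]
  · obtain ⟨⟨x, y⟩, d⟩ := e
    cases d <;> simp [Prod.ext_iff] <;> omega

lemma card_filter_tilesBoundary (h : IsSnakeList L s) {v : Pos}
    (hv : v ∈ (L.toFinset.biUnion tileEdges).biUnion edgeVerts) :
    ((tilesBoundary L).filter (v ∈ edgeVerts ·)).card = 2 := by
  obtain ⟨a, b⟩ := v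
  -- Of the four tiles around `(a, b)`, NW and SE share an antidiagonal, while NE and SW are two
  -- antidiagonals apart, so a snake through both passes through NW or SE.
  have hNW_SE : ¬((a - 1, b) ∈ L ∧ (a, b - 1) ∈ L) := fun ⟨h₁, h₂⟩ => by
    simpa [Prod.ext_iff] using h.eq_of_add_eq h₁ h₂ (by simp; ring)
  have hNE_SW : (a, b) ∈ L → (a - 1, b - 1) ∈ L → (a, b - 1) ∈ L ∨ (a - 1, b) ∈ L :=
    fun h₀ h₃ => by simpa using h.right_mem_or_up_mem h₃ h₀ (by simp; ring)
  have hex : (a, b) ∈ L ∨ (a - 1, b) ∈ L ∨ (a, b - 1) ∈ L ∨ (a - 1, b - 1) ∈ L := by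
    rw [Finset.biUnion_biUnion] at hv
    obtain ⟨t, ht, hvt⟩ := Finset.mem_biUnion.1 hv
    rcases mem_tileVerts_iff.1 hvt with rfl | rfl | rfl | rfl <;> simp_all
  rw [filter_tilesBoundary_mem_edgeVerts, Finset.card_filter, vertexEdges,
    Finset.sum_insert (by simp [Prod.ext_iff]; omega),
    Finset.sum_insert (by simp [Prod.ext_iff]; omega), Finset.sum_insert (by simp),
    Finset.sum_singleton]
  simp only [h.countP_mem_tileEdges, if_true]
  by_cases h₀ : (a, b) ∈ L <;> by_cases h₁ : (a - 1, b) ∈ L <;>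
    by_cases h₂ : (a, b - 1) ∈ L <;> by_cases h₃ : (a - 1, b - 1) ∈ L <;>
    simp_all

end IsSnakeList

lemma card_filter_subBoundary (g : List Bool) (a b : ℕ) :
    ∀ v ∈ (subEdges g a b).biUnion edgeVerts,
      ((subBoundary g a b).filter (v ∈ edgeVerts ·)).card = 2 :=
  fun _ => (isSnakeList_subTiles g a b).card_filter_tilesBoundary

namespace IsPM

variable {E P P' : Finset SEdge} {v : Pos}

lemma eq_of_mem (hP : IsPM E P) (hv : v ∈ E.biUnion edgeVerts) {e f : SEdge}
    (he : e ∈ P) (hve : v ∈ edgeVerts e) (hf : f ∈ P) (hvf : v ∈ edgeVerts f) : e = f := by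
  obtain ⟨_, -, hu⟩ := hP.2 v hv
  exact (hu e ⟨he, hve⟩).trans (hu f ⟨hf, hvf⟩).symm

lemma card_filter_le_two (hP : IsPM E P) (hP' : IsPM E P') (hv : v ∈ E.biUnion edgeVerts)
    {B : Finset SEdge} (hB : B ⊆ P ∪ P') : (B.filter (v ∈ edgeVerts ·)).card ≤ 2 := by
  obtain ⟨e, he, -⟩ := hP.2 v hv
  obtain ⟨e', he', -⟩ := hP'.2 v hv
  refine (Finset.card_le_card fun f hf => ?_).trans (Finset.card_le_two (a := e) (b := e'))
  obtain ⟨hfB, hvf⟩ := Finset.mem_filter.1 hf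
  rcases Finset.mem_union.1 (hB hfB) with hfP | hfP'
  · simp [hP.eq_of_mem hv hfP hvf he.1 he.2]
  · simp [hP'.eq_of_mem hv hfP' hvf he'.1 he'.2]

lemma exists_mem_of_subset_symmDiff (hP : IsPM E P) (hv : v ∈ E.biUnion edgeVerts)
    {B : Finset SEdge} (hB : B ⊆ symmDiff P P')
    (hdeg : (B.filter (v ∈ edgeVerts ·)).card = 2) :
    ∃ f ∈ B, f ∈ P' ∧ v ∈ edgeVerts f := by
  obtain ⟨f₁, f₂, hne, hf⟩ := Finset.card_eq_two.1 hdeg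
  have hmem : ∀ f ∈ ({f₁, f₂} : Finset SEdge), f ∈ B ∧ v ∈ edgeVerts f :=
    fun f h => Finset.mem_filter.1 (hf ▸ h)
  by_contra! hnone
  have hP_of : ∀ f ∈ ({f₁, f₂} : Finset SEdge), f ∈ P := fun f h => by
    obtain ⟨hfB, hvf⟩ := hmem f h
    have := hnone f hfB
    have := Finset.mem_symmDiff.1 (hB hfB)
    tauto
  exact hne (hP.eq_of_mem hv (hP_of f₁ (by simp)) (hmem f₁ (by simp)).2
    (hP_of f₂ (by simp)) (hmem f₂ (by simp)).2)

lemma inter_of_subset_symmDiff (hP : IsPM E P) (hP' : IsPM E P') {S B : Finset SEdge}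
    (hSE : S ⊆ E) (hBS : B ⊆ S) (hB : B ⊆ symmDiff P P')
    (hdeg : ∀ v ∈ S.biUnion edgeVerts, (B.filter (v ∈ edgeVerts ·)).card = 2) :
    IsPM S (P' ∩ S) ∧ P' ∩ S ⊆ B := by
  have hvE : S.biUnion edgeVerts ⊆ E.biUnion edgeVerts :=
    Finset.biUnion_subset_biUnion_of_subset_left _ hSE
  have hsub : P' ∩ S ⊆ B := fun e he => by
    obtain ⟨heP', heS⟩ := Finset.mem_inter.1 he
    have hve : e.1 ∈ edgeVerts e := by simp [edgeVerts]
    have hv : e.1 ∈ S.biUnion edgeVerts := Finset.mem_biUnion.2 ⟨e, heS, hve⟩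
    obtain ⟨f, hfB, hfP', hvf⟩ := hP.exists_mem_of_subset_symmDiff (hvE hv) hB (hdeg _ hv)
    rwa [hP'.eq_of_mem (hvE hv) heP' hve hfP' hvf]
  refine ⟨⟨Finset.inter_subset_right, fun v hv => ?_⟩, hsub⟩
  obtain ⟨f, hfB, hfP', hvf⟩ := hP.exists_mem_of_subset_symmDiff (hvE hv) hB (hdeg _ hv)
  refine ⟨f, ⟨Finset.mem_inter.2 ⟨hfP', hBS hfB⟩, hvf⟩, fun e ⟨he, hve⟩ => ?_⟩
  exact hP'.eq_of_mem (hvE hv) (Finset.mem_inter.1 he).1 hve hfP' hvf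

lemma disjoint_biUnion_edgeVerts (hP : IsPM E P) (hP' : IsPM E P')
    {S₁ S₂ B₁ B₂ : Finset SEdge} (hS₁ : S₁ ⊆ E) (hB₁ : B₁ ⊆ P ∪ P') (hB₂ : B₂ ⊆ P ∪ P')
    (hB : Disjoint B₁ B₂)
    (hdeg₁ : ∀ v ∈ S₁.biUnion edgeVerts, (B₁.filter (v ∈ edgeVerts ·)).card = 2)
    (hdeg₂ : ∀ v ∈ S₂.biUnion edgeVerts, (B₂.filter (v ∈ edgeVerts ·)).card = 2) :
    Disjoint (S₁.biUnion edgeVerts) (S₂.biUnion edgeVerts) := by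
  refine Finset.disjoint_left.2 fun v hv₁ hv₂ => ?_
  have hvE := Finset.biUnion_subset_biUnion_of_subset_left edgeVerts hS₁ hv₁
  have := hP.card_filter_le_two hP' hvE (Finset.union_subset hB₁ hB₂)
  rw [Finset.filter_union, Finset.card_union_of_disjoint (Finset.disjoint_filter_filter hB),
    hdeg₁ v hv₁, hdeg₂ v hv₂] at this
  omega

theorem sdiff_biUnion_union_biUnion {ι : Type*} {M : Finset SEdge} (hM : IsPM E M)
    {I : Finset ι} {S Q : ι → Finset SEdge} (hSE : ∀ i ∈ I, S i ⊆ E)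
    (hdisj : (I : Set ι).PairwiseDisjoint fun i => (S i).biUnion edgeVerts)
    (hMS : ∀ i ∈ I, IsPM (S i) (M ∩ S i)) (hQ : ∀ i ∈ I, IsPM (S i) (Q i)) :
    IsPM E ((M \ I.biUnion S) ∪ I.biUnion Q) := by
  have hQE : I.biUnion Q ⊆ E := Finset.biUnion_subset.2 fun i hi => (hQ i hi).1.trans (hSE i hi)
  have hvS : ∀ i ∈ I, ∀ e ∈ Q i, ∀ v ∈ edgeVerts e, v ∈ (S i).biUnion edgeVerts :=
    fun i hi e he v hv => Finset.mem_biUnion.2 ⟨e, (hQ i hi).1 he, hv⟩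
  refine ⟨Finset.union_subset (Finset.sdiff_subset.trans hM.1) hQE, fun v hv => ?_⟩
  by_cases hvI : ∃ i ∈ I, v ∈ (S i).biUnion edgeVerts
  · obtain ⟨i, hi, hvi⟩ := hvI
    obtain ⟨e, ⟨heQ, hve⟩, hu⟩ := (hQ i hi).2 v hvi
    refine ⟨e, ⟨Finset.mem_union_right _ (Finset.mem_biUnion.2 ⟨i, hi, heQ⟩), hve⟩, ?_⟩
    rintro f ⟨hf, hvf⟩
    rcases Finset.mem_union.1 hf with hf | hf
    · -- the `M`-edge at `v` lies in `S i`, so it was removed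
      obtain ⟨hfM, hfS⟩ := Finset.mem_sdiff.1 hf
      obtain ⟨f', ⟨hf'M, hvf'⟩⟩ := ((hMS i hi).2 v hvi).exists
      obtain rfl := hM.eq_of_mem hv hfM hvf (Finset.mem_inter.1 hf'M).1 hvf'
      exact absurd (Finset.mem_biUnion.2 ⟨i, hi, (Finset.mem_inter.1 hf'M).2⟩) hfS
    · obtain ⟨j, hj, hfQ⟩ := Finset.mem_biUnion.1 hf
      obtain rfl := hdisj.elim_finset hj hi v (hvS j hj f hfQ v hvf) hvi
      exact hu f ⟨hfQ, hvf⟩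
  · push Not at hvI
    obtain ⟨e, ⟨heM, hve⟩, hu⟩ := hM.2 v hv
    have hnS : ∀ i ∈ I, ∀ f ∈ S i, v ∉ edgeVerts f := fun i hi f hf hvf =>
      hvI i hi (Finset.mem_biUnion.2 ⟨f, hf, hvf⟩)
    refine ⟨e, ⟨Finset.mem_union_left _ (Finset.mem_sdiff.2 ⟨heM, ?_⟩), hve⟩, ?_⟩
    · simp only [Finset.mem_biUnion, not_exists, not_and]
      exact fun i hi heS => hnS i hi e heS hve
    rintro f ⟨hf, hvf⟩
    rcases Finset.mem_union.1 hf with hf | hf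
    · exact hu f ⟨(Finset.mem_sdiff.1 hf).1, hvf⟩
    · obtain ⟨j, hj, hfQ⟩ := Finset.mem_biUnion.1 hf
      exact absurd hvf (hnS j hj f ((hQ j hj).1 hfQ))

end IsPM

theorem restriction_of_min_matching_and_replacement_general (g : List Bool) (Pmin P : Finset SEdge)
    (hmin : IsMinPM g Pmin) (hP : IsPM (snakeEdges g) P)
    (I : Finset (ℕ × ℕ))
    (hIsep : (I : Set (ℕ × ℕ)).Pairwise fun q r => q.2 + 1 < r.1 ∨ r.2 + 1 < q.1)
    (hIdec : (P ∪ Pmin) \ (P ∩ Pmin) = I.biUnion (fun q => subBoundary g q.1 q.2)) :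
    (∀ q ∈ I,
      IsPM (subEdges g q.1 q.2) (Pmin ∩ subEdges g q.1 q.2) ∧
      Pmin ∩ subEdges g q.1 q.2 ⊆ subBoundary g q.1 q.2) ∧
    (∀ Q : ℕ × ℕ → Finset SEdge,
      (∀ q ∈ I, IsPM (subEdges g q.1 q.2) (Q q)) →
      IsPM (snakeEdges g)
        ((Pmin \ I.biUnion (fun q => subEdges g q.1 q.2)) ∪ I.biUnion Q)) := by
  have hsub (q : ℕ × ℕ) := subEdges_subset_snakeEdges g q.1 q.2
  have hB : ∀ q ∈ I, subBoundary g q.1 q.2 ⊆ symmDiff P Pmin := fun q hq e he => by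
    have h : e ∈ (P ∪ Pmin) \ (P ∩ Pmin) := hIdec ▸ Finset.mem_biUnion.2 ⟨q, hq, he⟩
    rwa [symmDiff_eq_sup_sdiff_inf]
  have hdeg (q : ℕ × ℕ) := card_filter_subBoundary g q.1 q.2
  have hres : ∀ q ∈ I, IsPM (subEdges g q.1 q.2) (Pmin ∩ subEdges g q.1 q.2) ∧
      Pmin ∩ subEdges g q.1 q.2 ⊆ subBoundary g q.1 q.2 := fun q hq =>
    hP.inter_of_subset_symmDiff hmin.1 (hsub q) (Finset.filter_subset _ _) (hB q hq) (hdeg q)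
  refine ⟨hres, fun Q hQ => hmin.1.sdiff_biUnion_union_biUnion (fun q _ => hsub q) ?_
    (fun q hq => (hres q hq).1) hQ⟩
  intro q hq r hr hqr
  exact hP.disjoint_biUnion_edgeVerts hmin.1 (hsub q) ((hB q hq).trans symmDiff_le_sup)
    ((hB r hr).trans symmDiff_le_sup)
    ((disjoint_subEdges g (hIsep hq hr hqr)).mono (Finset.filter_subset _ _)
      (Finset.filter_subset _ _))
    (hdeg q) (hdeg r)

/-- Let `H` be the union of snake subgraphs of a snake graph `G` arising as the symmetric
difference `P ⊖ Pmin` for a perfect matching `P` of `G`.  Then the restriction of `Pmin`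
to each connected component of `H` is the minimal perfect matching of that component (in
particular, a perfect matching of the component consisting only of its boundary edges);
consequently, replacing `Pmin` restricted to `H` by any perfect matching of `H` inside
`Pmin` yields a perfect matching of `G`. -/
theorem restriction_of_min_matching_and_replacement (g : List Bool) (Pmin P : Finset SEdge)
    (hmin : IsMinPM g Pmin) (hP : IsPM (snakeEdges g) P)
    (I : Finset (ℕ × ℕ))
    (hIrange : ∀ q ∈ I, q.1 ≤ q.2 ∧ q.2 < (snakeTiles g).length)
    (hIsep : (I : Set (ℕ × ℕ)).Pairwise fun q r => q.2 + 1 < r.1 ∨ r.2 + 1 < q.1)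
    (hIdec : (P ∪ Pmin) \ (P ∩ Pmin) = I.biUnion (fun q => subBoundary g q.1 q.2)) :
    (∀ q ∈ I,
      IsPM (subEdges g q.1 q.2) (Pmin ∩ subEdges g q.1 q.2) ∧
      Pmin ∩ subEdges g q.1 q.2 ⊆ subBoundary g q.1 q.2) ∧
    (∀ Q : ℕ × ℕ → Finset SEdge,
      (∀ q ∈ I, IsPM (subEdges g q.1 q.2) (Q q)) →
      IsPM (snakeEdges g)
        ((Pmin \ I.biUnion (fun q => subEdges g q.1 q.2)) ∪ I.biUnion Q)) :=
  restriction_of_min_matching_and_replacement_general g Pmin P hmin hP I hIsep hIdec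
end

section
/- The join-irreducible elements of the canonical submodule lattice L(M) of a string module M are exactly the nonzero canonical submodules N of M whose top is simple. -/
/-- A canonical submodule of the string module of a string with arrow data `s`
(`s.getD i false = true` means the `i`-th arrow is direct, pointing from vertex position
`i` to position `i + 1`; `false` means it is inverse, pointing from `i + 1` to `i`),
described by the set `S` of vertex positions supporting it: `S` must be closed under the
arrow maps of the string module. -/
def IsCanonSub (s : List Bool) (S : Finset ℕ) : Prop :=
  (∀ i ∈ S, i < s.length + 1) ∧
  ∀ i < s.length,
    (s.getD i false = true → i ∈ S → i + 1 ∈ S) ∧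
    (s.getD i false = false → i + 1 ∈ S → i ∈ S)

/-- The top `N / rad N` of the canonical submodule supported on `S`: the positions of `S`
that are not the target of an arrow starting at another position of `S`. -/
def topSet (s : List Bool) (S : Finset ℕ) : Finset ℕ :=
  S.filter fun i =>
    ¬((0 < i ∧ i - 1 ∈ S ∧ s.getD (i - 1) false = true) ∨
      (i + 1 ∈ S ∧ s.getD i false = false))

open scoped Classical

/-- One arrow step of the string module: from `i` to `j`. -/
def Step (s : List Bool) (i j : ℕ) : Prop :=
  (j = i + 1 ∧ i < s.length ∧ s.getD i false = true) ∨
  (i = j + 1 ∧ j < s.length ∧ s.getD j false = false)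

/-- Downward reachability. -/
def Down (s : List Bool) (t i : ℕ) : Prop := Relation.ReflTransGen (Step s) t i

lemma mem_of_step {s : List Bool} {S : Finset ℕ} (hS : IsCanonSub s S)
    {i j : ℕ} (hi : i ∈ S) (h : Step s i j) : j ∈ S := by
  rcases h with ⟨rfl, hl, hb⟩ | ⟨rfl, hl, hb⟩
  · exact (hS.2 i hl).1 hb hi
  · exact (hS.2 j hl).2 hb hi

lemma mem_of_down {s : List Bool} {S : Finset ℕ} (hS : IsCanonSub s S)
    {t i : ℕ} (ht : t ∈ S) (h : Down s t i) : i ∈ S := by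
  induction h with
  | refl => exact ht
  | tail _ hstep ih => exact mem_of_step hS ih hstep

/-- The canonical submodule generated by position `t`. -/
noncomputable def gen (s : List Bool) (t : ℕ) : Finset ℕ :=
  (Finset.range (s.length + 1)).filter (Down s t)

lemma mem_gen {s : List Bool} {t i : ℕ} :
    i ∈ gen s t ↔ i < s.length + 1 ∧ Down s t i := by
  simp [gen, Finset.mem_filter, Finset.mem_range]

lemma isCanonSub_gen (s : List Bool) (t : ℕ) : IsCanonSub s (gen s t) := by
  refine ⟨fun i hi => (mem_gen.mp hi).1, fun i hil => ⟨?_, ?_⟩⟩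
  · intro hb hi
    obtain ⟨_, hd⟩ := mem_gen.mp hi
    exact mem_gen.mpr ⟨by omega, hd.tail (Or.inl ⟨rfl, hil, hb⟩)⟩
  · intro hb hi
    obtain ⟨_, hd⟩ := mem_gen.mp hi
    exact mem_gen.mpr ⟨by omega, hd.tail (Or.inr ⟨rfl, hil, hb⟩)⟩

lemma self_mem_gen {s : List Bool} {t : ℕ} (ht : t < s.length + 1) : t ∈ gen s t :=
  mem_gen.mpr ⟨ht, Relation.ReflTransGen.refl⟩

lemma gen_subset {s : List Bool} {S : Finset ℕ} (hS : IsCanonSub s S)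
    {t : ℕ} (ht : t ∈ S) : gen s t ⊆ S :=
  fun _ hi => mem_of_down hS ht (mem_gen.mp hi).2

/-- Potential function: strictly increases along `Step`. -/
noncomputable def phi (s : List Bool) (i : ℕ) : ℕ :=
  ((Finset.range s.length).filter
    (fun k => (k < i ∧ s.getD k false = true) ∨ (i ≤ k ∧ s.getD k false = false))).card

lemma phi_succ_of_true {s : List Bool} {j : ℕ} (hl : j < s.length)
    (hb : s.getD j false = true) : phi s (j + 1) = phi s j + 1 := by
  have key : (Finset.range s.length).filter
      (fun k => (k < j + 1 ∧ s.getD k false = true) ∨ (j + 1 ≤ k ∧ s.getD k false = false))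
      = insert j ((Finset.range s.length).filter
      (fun k => (k < j ∧ s.getD k false = true) ∨ (j ≤ k ∧ s.getD k false = false))) := by
    ext x
    simp only [Finset.mem_filter, Finset.mem_range, Finset.mem_insert]
    by_cases hx : x = j
    · subst hx
      exact iff_of_true ⟨hl, Or.inl ⟨Nat.lt_succ_self x, hb⟩⟩ (Or.inl rfl)
    · constructor
      · rintro ⟨hr, (⟨h1, h2⟩ | ⟨h1, h2⟩)⟩
        · exact Or.inr ⟨hr, Or.inl ⟨by omega, h2⟩⟩
        · exact Or.inr ⟨hr, Or.inr ⟨by omega, h2⟩⟩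
      · rintro (rfl | ⟨hr, (⟨h1, h2⟩ | ⟨h1, h2⟩)⟩)
        · exact absurd rfl hx
        · exact ⟨hr, Or.inl ⟨by omega, h2⟩⟩
        · exact ⟨hr, Or.inr ⟨by omega, h2⟩⟩
  have hnot : j ∉ (Finset.range s.length).filter
      (fun k => (k < j ∧ s.getD k false = true) ∨ (j ≤ k ∧ s.getD k false = false)) := by
    intro hmem
    rcases (Finset.mem_filter.mp hmem).2 with ⟨h1, _⟩ | ⟨_, h2⟩
    · omega
    · rw [hb] at h2; exact Bool.noConfusion h2
  rw [phi, phi, key, Finset.card_insert_of_notMem hnot]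

lemma phi_succ_of_false {s : List Bool} {i : ℕ} (hl : i < s.length)
    (hb : s.getD i false = false) : phi s i = phi s (i + 1) + 1 := by
  have key : (Finset.range s.length).filter
      (fun k => (k < i ∧ s.getD k false = true) ∨ (i ≤ k ∧ s.getD k false = false))
      = insert i ((Finset.range s.length).filter
      (fun k => (k < i + 1 ∧ s.getD k false = true) ∨ (i + 1 ≤ k ∧ s.getD k false = false))) := by
    ext x
    simp only [Finset.mem_filter, Finset.mem_range, Finset.mem_insert]
    by_cases hx : x = i
    · subst hx
      exact iff_of_true ⟨hl, Or.inr ⟨le_refl x, hb⟩⟩ (Or.inl rfl)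
    · constructor
      · rintro ⟨hr, (⟨h1, h2⟩ | ⟨h1, h2⟩)⟩
        · exact Or.inr ⟨hr, Or.inl ⟨by omega, h2⟩⟩
        · exact Or.inr ⟨hr, Or.inr ⟨by omega, h2⟩⟩
      · rintro (rfl | ⟨hr, (⟨h1, h2⟩ | ⟨h1, h2⟩)⟩)
        · exact absurd rfl hx
        · exact ⟨hr, Or.inl ⟨by omega, h2⟩⟩
        · exact ⟨hr, Or.inr ⟨by omega, h2⟩⟩
  have hnot : i ∉ (Finset.range s.length).filter
      (fun k => (k < i + 1 ∧ s.getD k false = true) ∨ (i + 1 ≤ k ∧ s.getD k false = false)) := by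
    intro hmem
    rcases (Finset.mem_filter.mp hmem).2 with ⟨_, h2⟩ | ⟨h1, _⟩
    · rw [hb] at h2; exact Bool.noConfusion h2
    · omega
  rw [phi, phi, key, Finset.card_insert_of_notMem hnot]

lemma phi_lt_of_step {s : List Bool} {j i : ℕ} (h : Step s j i) : phi s j < phi s i := by
  rcases h with ⟨rfl, hl, hb⟩ | ⟨rfl, hl, hb⟩
  · rw [phi_succ_of_true hl hb]; omega
  · rw [phi_succ_of_false hl hb]; omega

/-- A position hit by a step from inside `S` is not in the top. -/
lemma not_top_of_step {s : List Bool} {S : Finset ℕ} {j i : ℕ}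
    (hj : j ∈ S) (h : Step s j i) : i ∉ topSet s S := by
  intro htop
  rw [topSet, Finset.mem_filter] at htop
  apply htop.2
  rcases h with ⟨rfl, hl, hb⟩ | ⟨rfl, hl, hb⟩
  · exact Or.inl ⟨by omega, by simpa using hj, by simpa using hb⟩
  · exact Or.inr ⟨hj, hb⟩

/-- Every element of a canonical submodule is reached from a top element. -/
lemma reach_top {s : List Bool} {S : Finset ℕ} (hS : IsCanonSub s S) :
    ∀ i ∈ S, ∃ t ∈ topSet s S, Down s t i := by
  suffices H : ∀ m : ℕ, ∀ i, phi s i < m → i ∈ S → ∃ t ∈ topSet s S, Down s t i by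
    exact fun i hi => H (phi s i + 1) i (by omega) hi
  intro m
  induction m with
  | zero => intro i hφ; omega
  | succ m ih =>
    intro i hφ hi
    by_cases ht : i ∈ topSet s S
    · exact ⟨i, ht, Relation.ReflTransGen.refl⟩
    · have hreach : (0 < i ∧ i - 1 ∈ S ∧ s.getD (i - 1) false = true) ∨
          (i + 1 ∈ S ∧ s.getD i false = false) := by
        by_contra hc
        exact ht (Finset.mem_filter.mpr ⟨hi, hc⟩)
      obtain ⟨j, hj, hstep⟩ : ∃ j ∈ S, Step s j i := by
        rcases hreach with ⟨h0, hmem, hb⟩ | ⟨hmem, hb⟩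
        · refine ⟨i - 1, hmem, Or.inl ⟨by omega, ?_, hb⟩⟩
          have := hS.1 i hi; omega
        · refine ⟨i + 1, hmem, Or.inr ⟨rfl, ?_, hb⟩⟩
          have := hS.1 (i + 1) hmem; omega
      have hφj : phi s j < m := by
        have := phi_lt_of_step hstep; omega
      obtain ⟨t, htop, hdown⟩ := ih j hφj hj
      exact ⟨t, htop, hdown.tail hstep⟩

lemma isCanonSub_biUnion {s : List Bool} (T : Finset ℕ) (f : ℕ → Finset ℕ)
    (h : ∀ t ∈ T, IsCanonSub s (f t)) : IsCanonSub s (T.biUnion f) := by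
  constructor
  · intro i hi
    obtain ⟨t, ht, hit⟩ := Finset.mem_biUnion.mp hi
    exact (h t ht).1 i hit
  · intro i hil
    constructor
    · intro hb hi
      obtain ⟨t, ht, hit⟩ := Finset.mem_biUnion.mp hi
      exact Finset.mem_biUnion.mpr ⟨t, ht, ((h t ht).2 i hil).1 hb hit⟩
    · intro hb hi
      obtain ⟨t, ht, hit⟩ := Finset.mem_biUnion.mp hi
      exact Finset.mem_biUnion.mpr ⟨t, ht, ((h t ht).2 i hil).2 hb hit⟩

/-- A top element reached nontrivially leads to a contradiction. -/
lemma eq_of_down_top {s : List Bool} {S : Finset ℕ} (hS : IsCanonSub s S)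
    {t t' : ℕ} (ht : t ∈ S) (ht' : t' ∈ topSet s S) (h : Down s t t') : t' = t := by
  rcases h.cases_tail with h | ⟨c, hdc, hstep⟩
  · exact h
  · exact absurd ht' (not_top_of_step (mem_of_down hS ht hdc) hstep)

/-- The join-irreducible elements of the canonical submodule lattice `L(M)` of a string
module `M` (ordered by inclusion, with join given by union) are exactly the nonzero
canonical submodules `N` of `M` whose top is simple. -/
theorem join_irreducible_iff_simple_top (s : List Bool) (S : Finset ℕ)
    (hS : IsCanonSub s S) :
    (S.Nonempty ∧
      ∀ A B : Finset ℕ, IsCanonSub s A → IsCanonSub s B → S = A ∪ B → S = A ∨ S = B)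
    ↔ (S.Nonempty ∧ (topSet s S).card = 1) := by
  have htopsub : topSet s S ⊆ S := Finset.filter_subset _ _
  constructor
  · rintro ⟨hne, hirr⟩
    refine ⟨hne, ?_⟩
    obtain ⟨i, hi⟩ := hne
    obtain ⟨t, htop, -⟩ := reach_top hS i hi
    -- uniqueness of top elements
    have huniq : ∀ t₁ ∈ topSet s S, ∀ t₂ ∈ topSet s S, t₁ = t₂ := by
      intro t₁ ht₁ t₂ ht₂
      by_contra hne'
      set A := gen s t₁ with hA
      set B := (topSet s S \ {t₁}).biUnion (gen s) with hB
      have hAc : IsCanonSub s A := isCanonSub_gen s t₁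
      have hBc : IsCanonSub s B := isCanonSub_biUnion _ _ (fun t _ => isCanonSub_gen s t)
      have hdecomp : S = A ∪ B := by
        apply Finset.Subset.antisymm
        · intro x hx
          obtain ⟨t', ht', hdown⟩ := reach_top hS x hx
          by_cases h : t' = t₁
          · subst h
            exact Finset.mem_union_left _ (mem_gen.mpr ⟨hS.1 x hx, hdown⟩)
          · refine Finset.mem_union_right _ (Finset.mem_biUnion.mpr
              ⟨t', Finset.mem_sdiff.mpr ⟨ht', by simpa using h⟩,
                mem_gen.mpr ⟨hS.1 x hx, hdown⟩⟩)
        · refine Finset.union_subset (gen_subset hS (htopsub ht₁)) ?_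
          intro x hx
          obtain ⟨t', ht', hxt⟩ := Finset.mem_biUnion.mp hx
          exact gen_subset hS (htopsub (Finset.mem_sdiff.mp ht').1) hxt
      rcases hirr A B hAc hBc hdecomp with h | h
      · -- t₂ ∈ A = gen t₁, t₂ ≠ t₁, contradiction
        have ht₂A : t₂ ∈ A := h ▸ htopsub ht₂
        have hdown : Down s t₁ t₂ := (mem_gen.mp ht₂A).2
        exact hne' (eq_of_down_top hS (htopsub ht₁) ht₂ hdown).symm
      · -- t₁ ∈ B, so t₁ ∈ gen t for some top t ≠ t₁
        have ht₁B : t₁ ∈ B := h ▸ htopsub ht₁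
        obtain ⟨t', ht', hxt⟩ := Finset.mem_biUnion.mp ht₁B
        obtain ⟨ht'top, ht'ne⟩ := Finset.mem_sdiff.mp ht'
        have : t₁ = t' := eq_of_down_top hS (htopsub ht'top) ht₁ (mem_gen.mp hxt).2
        simp [this] at ht'ne
      -- end
    rw [Finset.card_eq_one]
    exact ⟨t, Finset.eq_singleton_iff_unique_mem.mpr ⟨htop, fun x hx => huniq x hx t htop⟩⟩
  · rintro ⟨hne, hcard⟩
    refine ⟨hne, ?_⟩
    obtain ⟨t, htS⟩ := Finset.card_eq_one.mp hcard
    have httop : t ∈ topSet s S := htS ▸ Finset.mem_singleton_self t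
    have htS' : t ∈ S := htopsub httop
    have key : ∀ A B : Finset ℕ, IsCanonSub s A → IsCanonSub s B → S = A ∪ B →
        t ∈ A → S = A := by
      intro A B hA hB hdecomp htA
      apply Finset.Subset.antisymm
      · intro i hi
        obtain ⟨t', ht', hdown⟩ := reach_top hS i hi
        have : t' = t := by
          have := htS ▸ ht'
          simpa using this
        subst this
        exact mem_of_down hA htA hdown
      · exact hdecomp ▸ Finset.subset_union_left
    intro A B hA hB hdecomp
    have : t ∈ A ∪ B := hdecomp ▸ htS'
    rcases Finset.mem_union.mp this with h | h
    · exact Or.inl (key A B hA hB hdecomp h)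
    · exact Or.inr (key B A hB hA (by rw [hdecomp, Finset.union_comm]) h)
end

section
/- Let M be a string module whose snake graph has n+1 tiles numbered 1,…,n+1 linearly along the snake. Any maximal chain in the canonical submodule lattice L(M) has length n, its edge labels i_1,…,i_n are a permutation of {1,…,n} (with tiles 1 and n+1 appropriately excluded per convention, i.e., the labels are pairwise distinct), and the product s_{i_1}⋯s_{i_n} of simple transpositions in the symmetric group S_{n+1} is a reduced expression of a Coxeter element. -/
/-- The simple transposition `s_i = (i, i+1)` in the symmetric group on
`{0, 1, …, n + 1}` (tiles are numbered `0, …, n`, so the ambient symmetric group is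
`S_{n+2}`, the symmetric group on one more letter than the number of tiles). -/
def adjTrans (n : ℕ) (i : ℕ) : Equiv.Perm (Fin (n + 2)) :=
  Equiv.swap (Fin.ofNat (n + 2) i) (Fin.ofNat (n + 2) (i + 1))

/-- `c`, with edge labels `lab`, is a maximal chain in the canonical submodule lattice of
the string with arrow data `s` (of length `n`, so the snake graph has `n + 1` tiles
numbered `0, …, n`): it runs from the zero submodule to the whole module, each step
inserting the single position `lab k`. -/
def IsSubmodMaxChain (n : ℕ) (s : List Bool) (c : Fin (n + 2) → Finset ℕ)
    (lab : Fin (n + 1) → ℕ) : Prop :=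
  c 0 = ∅ ∧ c (Fin.last (n + 1)) = Finset.range (n + 1) ∧
  (∀ k, IsCanonSub s (c k)) ∧
  ∀ k : Fin (n + 1), lab k ∉ c k.castSucc ∧ c k.succ = insert (lab k) (c k.castSucc)

open Function

section InsertChain

variable {α : Type*} [DecidableEq α] {m : ℕ} {c : Fin (m + 1) → Finset α} {lab : Fin m → α}

theorem monotone_of_insert_chain (hstep : ∀ k, c k.succ = insert (lab k) (c k.castSucc)) :
    Monotone c :=
  Fin.monotone_iff_le_succ.2 fun k => (hstep k).symm ▸ Finset.subset_insert _ _

theorem mem_last_of_insert_chain (hstep : ∀ k, c k.succ = insert (lab k) (c k.castSucc))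
    (k : Fin m) : lab k ∈ c (Fin.last m) :=
  monotone_of_insert_chain hstep (Fin.le_last k.succ) (hstep k ▸ Finset.mem_insert_self _ _)

theorem injective_of_insert_chain (hnew : ∀ k, lab k ∉ c k.castSucc)
    (hstep : ∀ k, c k.succ = insert (lab k) (c k.castSucc)) : Injective lab := by
  refine Injective.of_lt_imp_ne fun k k' hlt heq => hnew k' ?_
  have hsub : c k.succ ⊆ c k'.castSucc :=
    monotone_of_insert_chain hstep (Fin.succ_le_castSucc_iff.2 hlt)
  exact heq ▸ hsub (hstep k ▸ Finset.mem_insert_self _ _)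

end InsertChain

theorem List.ofFn_perm_range {m : ℕ} {f : Fin m → ℕ} (hf : Injective f) (hlt : ∀ k, f k < m) :
    (List.ofFn f).Perm (List.range m) := by
  refine ((List.nodup_ofFn.2 hf).subperm fun x hx => ?_).perm_of_length_le (by simp)
  obtain ⟨k, rfl⟩ := List.mem_ofFn.1 hx
  exact List.mem_range.2 (hlt k)

section AdjTrans

variable {n i j : ℕ}

theorem adjTrans_val_le_iff (hi : i ≤ n) (hij : i ≠ j) (x : Fin (n + 2)) :
    (adjTrans n i x).val ≤ j ↔ x.val ≤ j := by
  have hi₀ : (Fin.ofNat (n + 2) i).val = i := Nat.mod_eq_of_lt (by omega)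
  have hi₁ : (Fin.ofNat (n + 2) (i + 1)).val = i + 1 := Nat.mod_eq_of_lt (by omega)
  unfold adjTrans
  rw [Equiv.swap_apply_def]
  split_ifs with h₀ h₁ <;> simp only [Fin.ext_iff, hi₀, hi₁] at * <;> omega

theorem adjTrans_apply_self (j : ℕ) :
    adjTrans n j (Fin.ofNat (n + 2) j) = Fin.ofNat (n + 2) (j + 1) :=
  Equiv.swap_apply_left _ _

theorem list_prod_map_adjTrans_val_le_iff {l : List ℕ} (hl : ∀ i ∈ l, i ≤ n) (hj : j ∉ l)
    (x : Fin (n + 2)) : ((l.map (adjTrans n)).prod x).val ≤ j ↔ x.val ≤ j := by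
  induction l generalizing x with
  | nil => simp
  | cons a t ih =>
    obtain ⟨ha, ht⟩ := List.forall_mem_cons.1 hl
    obtain ⟨hja, hjt⟩ := not_or.1 (List.mem_cons.not.1 hj)
    rw [List.map_cons, List.prod_cons, Equiv.Perm.mul_apply, adjTrans_val_le_iff ha (Ne.symm hja)]
    exact ih ht hjt x

theorem exists_val_le_lt_list_prod_map_adjTrans {w : List ℕ} (hw : ∀ i ∈ w, i ≤ n)
    (hnd : w.Nodup) (hj : j ∈ w) :
    ∃ x : Fin (n + 2), x.val ≤ j ∧ j < ((w.map (adjTrans n)).prod x).val := by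
  obtain ⟨a, b, rfl⟩ := List.append_of_mem hj
  obtain ⟨-, hjb, hdisj⟩ := List.nodup_append.1 hnd
  have hja : j ∉ a := fun h => hdisj j h j List.mem_cons_self rfl
  have hjb : j ∉ b := (List.nodup_cons.1 hjb).1
  have ha : ∀ i ∈ a, i ≤ n := fun i hi => hw i (by simp [hi])
  have hb : ∀ i ∈ b, i ≤ n := fun i hi => hw i (by simp [hi])
  have hj₁ : (Fin.ofNat (n + 2) (j + 1)).val = j + 1 :=
    Nat.mod_eq_of_lt (Nat.succ_lt_succ (Nat.lt_succ_of_le (hw j (by simp))))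
  set B := (b.map (adjTrans n)).prod
  refine ⟨B.symm (Fin.ofNat (n + 2) j), ?_, ?_⟩
  · rw [← list_prod_map_adjTrans_val_le_iff hb hjb, Equiv.apply_symm_apply]
    exact Nat.mod_le _ _
  · rw [List.map_append, List.prod_append, List.map_cons, List.prod_cons, Equiv.Perm.mul_apply,
      Equiv.Perm.mul_apply, Equiv.apply_symm_apply, adjTrans_apply_self, ← not_le,
      list_prod_map_adjTrans_val_le_iff ha hja, hj₁]
    omega

theorem mem_of_list_prod_map_adjTrans_eq {l w : List ℕ} (hl : ∀ i ∈ l, i ≤ n)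
    (hw : ∀ i ∈ w, i ≤ n) (hnd : w.Nodup) (hj : j ∈ w)
    (heq : (l.map (adjTrans n)).prod = (w.map (adjTrans n)).prod) : j ∈ l := by
  by_contra hjl
  obtain ⟨x, hx, hlt⟩ := exists_val_le_lt_list_prod_map_adjTrans hw hnd hj
  rw [← heq] at hlt
  exact absurd ((list_prod_map_adjTrans_val_le_iff hl hjl x).2 hx) (not_le.2 hlt)

theorem length_le_of_list_prod_map_adjTrans_eq {l w : List ℕ} (hw : w.Perm (List.range (n + 1)))
    (hl : ∀ i ∈ l, i ≤ n) (heq : (l.map (adjTrans n)).prod = (w.map (adjTrans n)).prod) :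
    n + 1 ≤ l.length := by
  have hw_le : ∀ i ∈ w, i ≤ n := fun i hi => Nat.lt_succ_iff.1 (List.mem_range.1 (hw.subset hi))
  have hsub : Finset.range (n + 1) ⊆ l.toFinset := fun j hj =>
    List.mem_toFinset.2 <| mem_of_list_prod_map_adjTrans_eq hl hw_le
      (hw.nodup_iff.2 List.nodup_range) (hw.mem_iff.2 (by simpa using hj)) heq
  calc n + 1 = (Finset.range (n + 1)).card := (Finset.card_range _).symm
    _ ≤ l.toFinset.card := Finset.card_le_card hsub
    _ ≤ l.length := l.toFinset_card_le

end AdjTrans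

theorem maximal_chain_gives_reduced_coxeter_word_general (n : ℕ) (s : List Bool)
    (c : Fin (n + 2) → Finset ℕ) (lab : Fin (n + 1) → ℕ)
    (hc : IsSubmodMaxChain n s c lab) :
    Function.Injective lab ∧ (∀ k, lab k ≤ n) ∧
    -- each simple transposition appears exactly once: the word is a Coxeter word
    (List.ofFn lab).Perm (List.range (n + 1)) ∧
    -- the word is reduced: no strictly shorter word in the generators has the same
    -- product
    (∀ l : List ℕ, (∀ j ∈ l, j ≤ n) →
      (l.map (adjTrans n)).prod = ((List.ofFn lab).map (adjTrans n)).prod →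
      n + 1 ≤ l.length) := by
  obtain ⟨-, htop, -, hchain⟩ := hc
  have hstep k := (hchain k).2
  have hinj : Injective lab := injective_of_insert_chain (fun k => (hchain k).1) hstep
  have hlt k : lab k < n + 1 := Finset.mem_range.1 (htop ▸ mem_last_of_insert_chain hstep k)
  have hperm := List.ofFn_perm_range hinj hlt
  exact ⟨hinj, fun k => Nat.lt_succ_iff.1 (hlt k), hperm,
    fun l hl heq => length_le_of_list_prod_map_adjTrans_eq hperm hl heq⟩

/-- Let `M` be a string module whose snake graph has `n + 1` tiles numbered linearly
along the snake.  Any maximal chain in the canonical submodule lattice `L(M)` has length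
`n + 1`, its edge labels are pairwise distinct and form a permutation of the tile
numbers, and the corresponding product of simple transpositions is a reduced expression
of a Coxeter element of the ambient symmetric group. -/
theorem maximal_chain_gives_reduced_coxeter_word (n : ℕ) (s : List Bool)
    (hs : s.length = n) (c : Fin (n + 2) → Finset ℕ) (lab : Fin (n + 1) → ℕ)
    (hc : IsSubmodMaxChain n s c lab) :
    Function.Injective lab ∧ (∀ k, lab k ≤ n) ∧
    -- each simple transposition appears exactly once: the word is a Coxeter word
    (List.ofFn lab).Perm (List.range (n + 1)) ∧
    -- the word is reduced: no strictly shorter word in the generators has the same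
    -- product
    (∀ l : List ℕ, (∀ j ∈ l, j ≤ n) →
      (l.map (adjTrans n)).prod = ((List.ofFn lab).map (adjTrans n)).prod →
      n + 1 ≤ l.length) :=
  maximal_chain_gives_reduced_coxeter_word_general n s c lab hc
end
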